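/- arXiv:2301.06413 — 5 statements merged into one kernel-verified Lean document; each statement's English description precedes it below -/
import Mathlib

section
/- Let w be a multiplicative arithmetic function with positive real values and let t be a real number such that w(p^{j-1}) ≤ p^{-t} · w(p^j) for all primes p and all integers j ≥ 1. Then for every integer n ≥ 1, the sum over divisors j of n of j^{-t} · w(j) · μ(n/j) is nonnegative, where μ is the Möbius function. -/
open Finset

theorem stmt_0 (w : ℕ → ℝ) (t : ℝ)
    (hw1 : w 1 = 1)
    (hwpos : ∀ n : ℕ, 1 ≤ n → 0 < w n)
    (hwmult : ∀ m n : ℕ, Nat.Coprime m n → w (m * n) = w m * w n)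
    (hgrowth : ∀ p j : ℕ, p.Prime → 1 ≤ j →
      w (p ^ (j - 1)) ≤ (p : ℝ) ^ (-t) * w (p ^ j)) :
    ∀ n : ℕ, 1 ≤ n →
      0 ≤ ∑ j ∈ n.divisors, (j : ℝ) ^ (-t) * w j *
        (ArithmeticFunction.moebius (n / j) : ℝ) := by
  intro n hn
  -- the multiplicative arithmetic function j ↦ j^(-t) * w j
  set f : ArithmeticFunction ℝ :=
    ⟨fun j => if j = 0 then 0 else (j : ℝ) ^ (-t) * w j, by simp⟩ with hf_def
  have hf_apply : ∀ j : ℕ, j ≠ 0 → f j = (j : ℝ) ^ (-t) * w j := by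
    intro j hj
    simp [hf_def, ArithmeticFunction.coe_mk, hj]
  have hfmult : f.IsMultiplicative := by
    constructor
    · simp [hf_def, ArithmeticFunction.coe_mk, Real.one_rpow, hw1]
    · intro m n hcop
      rcases eq_or_ne m 0 with rfl | hm
      · simp [hf_def, ArithmeticFunction.coe_mk]
      rcases eq_or_ne n 0 with rfl | hn0
      · simp [hf_def, ArithmeticFunction.coe_mk]
      rw [hf_apply _ (Nat.mul_ne_zero hm hn0), hf_apply _ hm, hf_apply _ hn0]
      have : ((m * n : ℕ) : ℝ) = (m : ℝ) * (n : ℝ) := by push_cast; ring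
      rw [this, Real.mul_rpow (by positivity) (by positivity),
        hwmult m n hcop]
      ring
  -- the Dirichlet convolution F = f * μ
  set F : ArithmeticFunction ℝ := f * (ArithmeticFunction.moebius : ArithmeticFunction ℤ)
    with hF_def
  have hFmult : F.IsMultiplicative :=
    hfmult.mul (ArithmeticFunction.isMultiplicative_moebius.intCast)
  -- the goal sum equals F n
  have hsum : (∑ j ∈ n.divisors, (j : ℝ) ^ (-t) * w j *
      (ArithmeticFunction.moebius (n / j) : ℝ)) = F n := by
    rw [hF_def, ArithmeticFunction.mul_apply, Nat.sum_divisorsAntidiagonal (f := fun i j => f i *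
      ((ArithmeticFunction.moebius : ArithmeticFunction ℤ) : ArithmeticFunction ℝ) j)]
    refine Finset.sum_congr rfl fun j hj => ?_
    have hj0 : j ≠ 0 := Nat.pos_of_mem_divisors hj |>.ne'
    rw [hf_apply j hj0, ArithmeticFunction.intCoe_apply]
  rw [hsum]
  -- F is nonnegative on prime powers
  have hFpp : ∀ p k : ℕ, p.Prime → k ≠ 0 → 0 ≤ F (p ^ k) := by
    intro p k hp hk
    obtain ⟨m, rfl⟩ := Nat.exists_eq_succ_of_ne_zero hk
    have hppos : (0 : ℝ) < (p : ℝ) := by exact_mod_cast hp.pos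
    have hcalc : F (p ^ (m + 1)) = f (p ^ (m + 1)) - f (p ^ m) := by
      rw [hF_def, ArithmeticFunction.mul_apply,
        Nat.sum_divisorsAntidiagonal (f := fun i j => f i *
          ((ArithmeticFunction.moebius : ArithmeticFunction ℤ) : ArithmeticFunction ℝ) j),
        Nat.sum_divisors_prime_pow hp]
      have hdiv : ∀ x, x ∈ Finset.range (m + 2) →
          f (p ^ x) * ((ArithmeticFunction.moebius : ArithmeticFunction ℤ) :
            ArithmeticFunction ℝ) (p ^ (m + 1) / p ^ x) =
          f (p ^ x) * ((ArithmeticFunction.moebius (p ^ (m + 1 - x)) : ℤ) : ℝ) := by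
        intro x hx
        rw [Finset.mem_range] at hx
        rw [Nat.pow_div (by omega) hp.pos, ArithmeticFunction.intCoe_apply]
      rw [Finset.sum_congr rfl hdiv, Finset.sum_range_succ, Finset.sum_range_succ]
      have h1 : m + 1 - (m + 1) = 0 := by omega
      have h2 : m + 1 - m = 1 := by omega
      rw [h1, h2, pow_zero, pow_one, ArithmeticFunction.moebius_apply_one,
        ArithmeticFunction.moebius_apply_prime hp]
      have hzero : ∀ x ∈ Finset.range m,
          f (p ^ x) * ((ArithmeticFunction.moebius (p ^ (m + 1 - x)) : ℤ) : ℝ) = 0 := by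
        intro x hx
        rw [Finset.mem_range] at hx
        rw [ArithmeticFunction.moebius_apply_prime_pow hp (by omega)]
        have : ¬ (m + 1 - x = 1) := by omega
        simp [this]
      rw [Finset.sum_eq_zero hzero]
      push_cast
      ring
    rw [hcalc, sub_nonneg, hf_apply _ (pow_ne_zero _ hp.pos.ne'),
      hf_apply _ (pow_ne_zero _ hp.pos.ne')]
    have hgrow := hgrowth p (m + 1) hp (by omega)
    simp only [Nat.add_sub_cancel] at hgrow
    have hcast : ((p ^ (m + 1) : ℕ) : ℝ) = ((p ^ m : ℕ) : ℝ) * (p : ℝ) := by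
      push_cast; ring
    rw [hcast, Real.mul_rpow (by positivity) (by positivity)]
    have hpm : (0 : ℝ) < ((p ^ m : ℕ) : ℝ) ^ (-t) := by
      apply Real.rpow_pos_of_pos
      exact_mod_cast pow_pos hp.pos m
    calc ((p ^ m : ℕ) : ℝ) ^ (-t) * w (p ^ m)
        ≤ ((p ^ m : ℕ) : ℝ) ^ (-t) * ((p : ℝ) ^ (-t) * w (p ^ (m + 1))) := by
          exact mul_le_mul_of_nonneg_left hgrow hpm.le
      _ = ((p ^ m : ℕ) : ℝ) ^ (-t) * (p : ℝ) ^ (-t) * w (p ^ (m + 1)) := by ring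
  -- conclude via multiplicative factorization
  have hn0 : n ≠ 0 := by omega
  rw [hFmult.multiplicative_factorization F hn0]
  rw [Finsupp.prod]
  apply Finset.prod_nonneg
  intro p hp
  have hpp : p.Prime := Nat.prime_of_mem_primeFactors
    (by rwa [Nat.support_factorization] at hp)
  exact hFpp p _ hpp (Finsupp.mem_support_iff.mp hp)
end

section
/- Let w be an additive arithmetic function with w(1) = 0 and w(n) ≥ 0, and let t ≤ 0 be a real number such that w(p^{j-1}) ≤ p^{-t} · w(p^j) for all primes p and all integers j ≥ 2. Then for every integer n ≥ 2, the sum over divisors j ≥ 2 of n of j^{-t} · w(j) · μ(n/j) is nonnegative. -/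
open Finset

private lemma sum_coprime_mul' {m n : ℕ} (hmn : m.Coprime n) (hm : m ≠ 0) (hn : n ≠ 0)
    (f : ℕ → ℝ) :
    ∑ d ∈ (m * n).divisors, f d = ∑ p ∈ m.divisors ×ˢ n.divisors, f (p.1 * p.2) := by
  apply Finset.sum_nbij' (i := fun d => (d.gcd m, d.gcd n)) (j := fun p => p.1 * p.2)
  · intro d hd
    simp [Finset.mem_product, Nat.mem_divisors, Nat.gcd_dvd_right, hm, hn]
  · rintro ⟨d1, d2⟩ hp
    simp only [Finset.mem_product, Nat.mem_divisors] at hp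
    exact Nat.mem_divisors.2 ⟨mul_dvd_mul hp.1.1 hp.2.1, mul_ne_zero hm hn⟩
  · intro d hd
    have hdvd : d ∣ m * n := (Nat.mem_divisors.1 hd).1
    have h : d.gcd (m * n) = d := Nat.gcd_eq_left hdvd
    rw [hmn.gcd_mul d] at h
    exact h
  · rintro ⟨d1, d2⟩ hp
    simp only [Finset.mem_product, Nat.mem_divisors] at hp
    have h1 : d2.Coprime m := Nat.Coprime.coprime_dvd_left hp.2.1 hmn.symm
    have h2 : d1.Coprime n := Nat.Coprime.coprime_dvd_left hp.1.1 hmn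
    have e1 : (d1 * d2).gcd m = d1 := by
      rw [h1.gcd_mul_right_cancel d1, Nat.gcd_eq_left hp.1.1]
    have e2 : (d1 * d2).gcd n = d2 := by
      rw [h2.gcd_mul_left_cancel d2, Nat.gcd_eq_left hp.2.1]
    simp [e1, e2]
  · intro d hd
    have hdvd : d ∣ m * n := (Nat.mem_divisors.1 hd).1
    have h : d.gcd (m * n) = d := Nat.gcd_eq_left hdvd
    rw [hmn.gcd_mul d] at h
    exact congrArg f h.symm

noncomputable def Tf (t : ℝ) (n : ℕ) : ℝ :=
  ∑ d ∈ n.divisors, (d : ℝ) ^ (-t) * (ArithmeticFunction.moebius (n / d) : ℝ)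

noncomputable def Gf (w : ℕ → ℝ) (t : ℝ) (n : ℕ) : ℝ :=
  ∑ d ∈ n.divisors, (d : ℝ) ^ (-t) * w d * (ArithmeticFunction.moebius (n / d) : ℝ)

private lemma moebius_split {m n d1 d2 : ℕ} (hmn : m.Coprime n) (h1 : d1 ∣ m) (h2 : d2 ∣ n) :
    (ArithmeticFunction.moebius (m * n / (d1 * d2)) : ℝ) =
      (ArithmeticFunction.moebius (m / d1) : ℝ) * (ArithmeticFunction.moebius (n / d2) : ℝ) := by
  have e : m * n / (d1 * d2) = (m / d1) * (n / d2) := (Nat.div_mul_div_comm h1 h2).symm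
  have hcop : (m / d1).Coprime (n / d2) :=
    Nat.Coprime.coprime_dvd_left (Nat.div_dvd_of_dvd h1)
      (Nat.Coprime.coprime_dvd_right (Nat.div_dvd_of_dvd h2) hmn)
  rw [e, ArithmeticFunction.isMultiplicative_moebius.map_mul_of_coprime hcop]
  push_cast
  ring

private lemma rpow_split {d1 d2 : ℕ} (t : ℝ) :
    ((d1 * d2 : ℕ) : ℝ) ^ (-t) = (d1 : ℝ) ^ (-t) * (d2 : ℝ) ^ (-t) := by
  push_cast
  exact Real.mul_rpow (Nat.cast_nonneg d1) (Nat.cast_nonneg d2)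

private lemma Tf_mul {t : ℝ} {m n : ℕ} (hmn : m.Coprime n) (hm : m ≠ 0) (hn : n ≠ 0) :
    Tf t (m * n) = Tf t m * Tf t n := by
  unfold Tf
  rw [sum_coprime_mul' hmn hm hn, Finset.sum_mul_sum, ← Finset.sum_product']
  apply Finset.sum_congr rfl
  rintro ⟨d1, d2⟩ hp
  simp only [Finset.mem_product, Nat.mem_divisors] at hp
  rw [rpow_split, moebius_split hmn hp.1.1 hp.2.1]
  ring

private lemma Gf_mul {w : ℕ → ℝ} {t : ℝ}
    (hwadd : ∀ m n : ℕ, 1 ≤ m → 1 ≤ n → Nat.Coprime m n → w (m * n) = w m + w n)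
    {m n : ℕ} (hmn : m.Coprime n) (hm : m ≠ 0) (hn : n ≠ 0) :
    Gf w t (m * n) = Gf w t m * Tf t n + Tf t m * Gf w t n := by
  unfold Gf Tf
  rw [sum_coprime_mul' hmn hm hn, Finset.sum_mul_sum, Finset.sum_mul_sum,
    ← Finset.sum_product', ← Finset.sum_product', ← Finset.sum_add_distrib]
  apply Finset.sum_congr rfl
  rintro ⟨d1, d2⟩ hp
  simp only [Finset.mem_product, Nat.mem_divisors] at hp
  have h1 : d1 ≠ 0 := fun h => hm (by simpa [h] using hp.1.1)
  have h2 : d2 ≠ 0 := fun h => hn (by simpa [h] using hp.2.1)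
  have hc : d1.Coprime d2 :=
    Nat.Coprime.coprime_dvd_left hp.1.1 (Nat.Coprime.coprime_dvd_right hp.2.1 hmn)
  rw [rpow_split, moebius_split hmn hp.1.1 hp.2.1,
    hwadd d1 d2 (Nat.one_le_iff_ne_zero.2 h1) (Nat.one_le_iff_ne_zero.2 h2) hc]
  ring

private lemma pp_sum {p a : ℕ} (hp : p.Prime) (ha : 1 ≤ a) (c : ℕ → ℝ) :
    ∑ i ∈ Finset.range (a + 1), c i * (ArithmeticFunction.moebius (p ^ (a - i)) : ℝ)
      = c a - c (a - 1) := by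
  have hsub : ({a - 1, a} : Finset ℕ) ⊆ Finset.range (a + 1) := by
    intro x hx
    simp only [Finset.mem_insert, Finset.mem_singleton] at hx
    rcases hx with rfl | rfl <;> simp [Finset.mem_range] <;> omega
  rw [← Finset.sum_subset hsub]
  · have hne : a - 1 ≠ a := by omega
    rw [Finset.sum_insert (by simp [hne]), Finset.sum_singleton]
    have e1 : a - (a - 1) = 1 := by omega
    have e2 : a - a = 0 := by omega
    rw [e1, e2, pow_one, pow_zero, ArithmeticFunction.moebius_apply_prime hp]
    simp
    ring
  · intro i hi hni
    simp only [Finset.mem_range] at hi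
    simp only [Finset.mem_insert, Finset.mem_singleton] at hni
    push_neg at hni
    have h2 : 2 ≤ a - i := by omega
    rw [ArithmeticFunction.moebius_apply_prime_pow hp (by omega), if_neg (by omega)]
    simp

private lemma Tf_pp {t : ℝ} {p a : ℕ} (hp : p.Prime) (ha : 1 ≤ a) :
    Tf t (p ^ a) = ((p ^ a : ℕ) : ℝ) ^ (-t) - ((p ^ (a - 1) : ℕ) : ℝ) ^ (-t) := by
  unfold Tf
  rw [Nat.sum_divisors_prime_pow hp]
  have : ∀ i ∈ Finset.range (a + 1),
      ((p ^ i : ℕ) : ℝ) ^ (-t) * (ArithmeticFunction.moebius (p ^ a / p ^ i) : ℝ)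
        = ((p ^ i : ℕ) : ℝ) ^ (-t) * (ArithmeticFunction.moebius (p ^ (a - i)) : ℝ) := by
    intro i hi
    simp only [Finset.mem_range] at hi
    rw [Nat.pow_div (by omega) hp.pos]
  rw [Finset.sum_congr rfl this, pp_sum hp ha]

private lemma Gf_pp {w : ℕ → ℝ} {t : ℝ} {p a : ℕ} (hp : p.Prime) (ha : 1 ≤ a) :
    Gf w t (p ^ a) = ((p ^ a : ℕ) : ℝ) ^ (-t) * w (p ^ a)
      - ((p ^ (a - 1) : ℕ) : ℝ) ^ (-t) * w (p ^ (a - 1)) := by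
  unfold Gf
  rw [Nat.sum_divisors_prime_pow hp]
  have : ∀ i ∈ Finset.range (a + 1),
      ((p ^ i : ℕ) : ℝ) ^ (-t) * w (p ^ i) * (ArithmeticFunction.moebius (p ^ a / p ^ i) : ℝ)
        = ((p ^ i : ℕ) : ℝ) ^ (-t) * w (p ^ i)
          * (ArithmeticFunction.moebius (p ^ (a - i)) : ℝ) := by
    intro i hi
    simp only [Finset.mem_range] at hi
    rw [Nat.pow_div (by omega) hp.pos]
  rw [Finset.sum_congr rfl this, pp_sum hp ha]

private lemma Tf_pp_nonneg {t : ℝ} (ht : t ≤ 0) {p a : ℕ} (hp : p.Prime) (ha : 1 ≤ a) :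
    0 ≤ Tf t (p ^ a) := by
  rw [Tf_pp hp ha]
  have h1 : ((p ^ (a - 1) : ℕ) : ℝ) ≤ ((p ^ a : ℕ) : ℝ) := by
    exact_mod_cast Nat.pow_le_pow_right hp.pos (by omega)
  have := Real.rpow_le_rpow (by positivity) h1 (by linarith : 0 ≤ -t)
  linarith

private lemma Gf_pp_nonneg {w : ℕ → ℝ} {t : ℝ} (hw1 : w 1 = 0)
    (hwnonneg : ∀ n : ℕ, 0 ≤ w n)
    (hgrowth : ∀ p j : ℕ, p.Prime → 2 ≤ j →
      w (p ^ (j - 1)) ≤ (p : ℝ) ^ (-t) * w (p ^ j))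
    {p a : ℕ} (hp : p.Prime) (ha : 1 ≤ a) :
    0 ≤ Gf w t (p ^ a) := by
  rw [Gf_pp hp ha]
  rcases eq_or_lt_of_le ha with h1 | h2
  · obtain rfl : a = 1 := h1.symm
    norm_num [hw1]
    exact mul_nonneg (by positivity) (hwnonneg p)
  · have ha2 : 2 ≤ a := h2
    have key := hgrowth p a hp ha2
    have e : ((p ^ a : ℕ) : ℝ) ^ (-t)
        = ((p ^ (a - 1) : ℕ) : ℝ) ^ (-t) * ((p : ℕ) : ℝ) ^ (-t) := by
      rw [← Real.mul_rpow (by positivity) (by positivity)]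
      congr 1
      push_cast
      rw [← pow_succ]
      congr 1
      omega
    rw [e]
    have hF : (0 : ℝ) ≤ ((p ^ (a - 1) : ℕ) : ℝ) ^ (-t) := by positivity
    nlinarith [hF, key]

private lemma both_nonneg (w : ℕ → ℝ) (t : ℝ) (hw1 : w 1 = 0)
    (hwnonneg : ∀ n : ℕ, 0 ≤ w n)
    (hwadd : ∀ m n : ℕ, 1 ≤ m → 1 ≤ n → Nat.Coprime m n → w (m * n) = w m + w n)
    (ht : t ≤ 0)
    (hgrowth : ∀ p j : ℕ, p.Prime → 2 ≤ j →
      w (p ^ (j - 1)) ≤ (p : ℝ) ^ (-t) * w (p ^ j)) :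
    ∀ n : ℕ, n ≠ 0 → 0 ≤ Tf t n ∧ 0 ≤ Gf w t n := by
  intro n
  induction n using Nat.recOnPrimePow with
  | zero => intro h; exact absurd rfl h
  | one =>
    intro _
    constructor
    · unfold Tf; simp [Nat.divisors_one]
    · unfold Gf; simp [Nat.divisors_one, hw1]
  | prime_pow_mul a p k hp hpa hk IH =>
    intro _
    have ha : a ≠ 0 := fun h => hpa (h ▸ dvd_zero p)
    obtain ⟨hTa, hGa⟩ := IH ha
    have hcop : (p ^ k).Coprime a := Nat.Coprime.pow_left k ((hp.coprime_iff_not_dvd).2 hpa)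
    have hpk : p ^ k ≠ 0 := pow_ne_zero k hp.pos.ne'
    have hTpk := Tf_pp_nonneg ht hp hk
    have hGpk := Gf_pp_nonneg hw1 hwnonneg hgrowth hp hk
    constructor
    · rw [Tf_mul hcop hpk ha]; positivity
    · rw [Gf_mul hwadd hcop hpk ha]; positivity

theorem stmt_1 (w : ℕ → ℝ) (t : ℝ)
    (hw1 : w 1 = 0)
    (hwnonneg : ∀ n : ℕ, 0 ≤ w n)
    (hwadd : ∀ m n : ℕ, 1 ≤ m → 1 ≤ n → Nat.Coprime m n → w (m * n) = w m + w n)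
    (ht : t ≤ 0)
    (hgrowth : ∀ p j : ℕ, p.Prime → 2 ≤ j →
      w (p ^ (j - 1)) ≤ (p : ℝ) ^ (-t) * w (p ^ j)) :
    ∀ n : ℕ, 2 ≤ n →
      0 ≤ ∑ j ∈ n.divisors.filter (fun j => 2 ≤ j), (j : ℝ) ^ (-t) * w j *
        (ArithmeticFunction.moebius (n / j) : ℝ) := by
  intro n hn
  have key := (both_nonneg w t hw1 hwnonneg hwadd ht hgrowth n (by omega)).2
  have hsplit : Gf w t n
      = ∑ j ∈ n.divisors.filter (fun j => 2 ≤ j), (j : ℝ) ^ (-t) * w j *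
          (ArithmeticFunction.moebius (n / j) : ℝ)
        + ∑ j ∈ n.divisors.filter (fun j => ¬ 2 ≤ j), (j : ℝ) ^ (-t) * w j *
          (ArithmeticFunction.moebius (n / j) : ℝ) := by
    unfold Gf
    rw [Finset.sum_filter_add_sum_filter_not]
  have hzero : ∑ j ∈ n.divisors.filter (fun j => ¬ 2 ≤ j), (j : ℝ) ^ (-t) * w j *
      (ArithmeticFunction.moebius (n / j) : ℝ) = 0 := by
    apply Finset.sum_eq_zero
    intro j hj
    simp only [Finset.mem_filter, Nat.mem_divisors] at hj
    have hj1 : j = 1 := by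
      have := Nat.pos_of_dvd_of_pos hj.1.1 (by omega)
      omega
    simp [hj1, hw1]
  rw [hsplit, hzero, add_zero] at key
  exact key
end

section
/- For every positive integer α and every integer n ≥ 1, the divisor sum ∑_{j | n} (log j)^α μ(n/j) is nonnegative (the generalized von Mangoldt function Λ_α is nonnegative). -/
open Finset ArithmeticFunction

namespace MyAux

noncomputable def lam (α : ℕ) : ArithmeticFunction ℝ :=
  ((ArithmeticFunction.log).ppow α) * (ArithmeticFunction.moebius : ArithmeticFunction ℤ)

lemma pmul_log_mul (f g : ArithmeticFunction ℝ) :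
    (f * g).pmul ArithmeticFunction.log
      = (f.pmul ArithmeticFunction.log) * g + f * (g.pmul ArithmeticFunction.log) := by
  ext n
  simp only [pmul_apply, mul_apply, log_apply, ArithmeticFunction.add_apply, Finset.sum_mul]
  rw [← Finset.sum_add_distrib]
  refine Finset.sum_congr rfl fun p hp => ?_
  obtain ⟨hpn, hn⟩ := Nat.mem_divisorsAntidiagonal.mp hp
  have h1 : p.1 ≠ 0 := by rintro h; rw [h] at hpn; simp at hpn; omega
  have h2 : p.2 ≠ 0 := by rintro h; rw [h] at hpn; simp at hpn; omega
  have : Real.log n = Real.log p.1 + Real.log p.2 := by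
    rw [← hpn]; push_cast
    rw [Real.log_mul (by exact_mod_cast h1) (by exact_mod_cast h2)]
  rw [this]; ring

lemma pmul_moebius_log :
    (ArithmeticFunction.moebius : ArithmeticFunction ℝ).pmul ArithmeticFunction.log
      = -ArithmeticFunction.vonMangoldt * (ArithmeticFunction.moebius : ArithmeticFunction ℤ) := by
  have hz : ((ArithmeticFunction.moebius : ArithmeticFunction ℝ).pmul ArithmeticFunction.log)
      * (ArithmeticFunction.zeta : ArithmeticFunction ℝ) = -ArithmeticFunction.vonMangoldt := by
    ext n
    rw [ArithmeticFunction.coe_mul_zeta_apply]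
    simpa [pmul_apply, log_apply] using ArithmeticFunction.sum_moebius_mul_log_eq (n := n)
  calc (ArithmeticFunction.moebius : ArithmeticFunction ℝ).pmul ArithmeticFunction.log
      = ((ArithmeticFunction.moebius : ArithmeticFunction ℝ).pmul ArithmeticFunction.log)
        * ((ArithmeticFunction.zeta : ArithmeticFunction ℝ) * (ArithmeticFunction.moebius : ArithmeticFunction ℤ)) := by
        rw [ArithmeticFunction.coe_zeta_mul_coe_moebius, mul_one]
    _ = _ := by rw [← mul_assoc, hz]

lemma lam_one : lam 1 = ArithmeticFunction.vonMangoldt := by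
  rw [lam, ppow_succ', ppow_zero, pmul_zeta, log_mul_moebius_eq_vonMangoldt]

lemma lam_succ (α : ℕ) :
    lam (α + 1) = (lam α).pmul ArithmeticFunction.log + lam α * ArithmeticFunction.vonMangoldt := by
  simp only [lam]
  rw [pmul_log_mul, pmul_moebius_log,
    pmul_comm ((ArithmeticFunction.log).ppow α) ArithmeticFunction.log, ← ppow_succ']
  ring

lemma lam_nonneg (α : ℕ) (hα : 1 ≤ α) : ∀ n : ℕ, 0 ≤ lam α n := by
  induction α with
  | zero => omega
  | succ α ih =>
    intro n
    rcases Nat.eq_or_lt_of_le hα with h | h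
    · rw [← h, lam_one]; exact vonMangoldt_nonneg
    · have hα' : 1 ≤ α := by omega
      rw [lam_succ, ArithmeticFunction.add_apply, pmul_apply, log_apply, mul_apply]
      have h1 : 0 ≤ lam α n * Real.log n := by
        rcases Nat.eq_zero_or_pos n with rfl | hn
        · simp
        · exact mul_nonneg (ih hα' _) (Real.log_natCast_nonneg n)
      have h2 : 0 ≤ ∑ p ∈ n.divisorsAntidiagonal, lam α p.1 * ArithmeticFunction.vonMangoldt p.2 :=
        Finset.sum_nonneg fun p _ => mul_nonneg (ih hα' _) vonMangoldt_nonneg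
      exact add_nonneg h1 h2

end MyAux

theorem stmt_10 (α : ℕ) (hα : 1 ≤ α) (n : ℕ) (hn : 1 ≤ n) :
    0 ≤ ∑ j ∈ n.divisors, (Real.log j) ^ α *
      (ArithmeticFunction.moebius (n / j) : ℝ) := by
  have key := MyAux.lam_nonneg α hα n
  rw [MyAux.lam, ArithmeticFunction.mul_apply] at key
  rw [← Nat.sum_divisorsAntidiagonal (fun a b => (Real.log a) ^ α *
    (ArithmeticFunction.moebius b : ℝ))]
  refine le_trans key (le_of_eq (Finset.sum_congr rfl fun p hp => ?_))
  rw [ArithmeticFunction.ppow_apply (by omega), ArithmeticFunction.log_apply,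
    ArithmeticFunction.intCoe_apply]
end

section
/- A kernel of the form k(s,u) = ∑_{n≥2} c_n n^{-s-ū} on a half-plane ℍ_β × ℍ_β (with the series absolutely convergent there and c_n real) is positive semi-definite if and only if c_n ≥ 0 for all n ≥ 2. -/
open scoped ComplexOrder


open Complex Finset in
private lemma key17 (c : ℕ → ℝ) {m : ℕ} (pts : Fin m → ℂ) (lam : Fin m → ℂ)
    (hsum : ∀ i j : Fin m, Summable (fun n : ℕ =>
      ‖(if 2 ≤ n then (c n : ℂ) * (n : ℂ) ^ (-(pts i) - (starRingEnd ℂ) (pts j)) else 0)‖)) :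
    ∑ i, ∑ j, lam i * (starRingEnd ℂ) (lam j) *
        ∑' n : ℕ, (if 2 ≤ n
          then (c n : ℂ) * (n : ℂ) ^ (-(pts i) - (starRingEnd ℂ) (pts j)) else 0)
    = ((∑' n : ℕ, (if 2 ≤ n then
        c n * Complex.normSq (∑ i, lam i * (n : ℂ) ^ (-(pts i))) else 0) : ℝ) : ℂ) := by
  have hf : ∀ i j : Fin m, Summable (fun n : ℕ =>
      (if 2 ≤ n then (c n : ℂ) * (n : ℂ) ^ (-(pts i) - (starRingEnd ℂ) (pts j)) else 0)) :=
    fun i j => (hsum i j).of_norm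
  have h1 : ∀ i : Fin m, (∑ j, lam i * (starRingEnd ℂ) (lam j) *
      ∑' n : ℕ, (if 2 ≤ n then (c n : ℂ) * (n : ℂ) ^ (-(pts i) - (starRingEnd ℂ) (pts j)) else 0))
      = ∑' n : ℕ, ∑ j, lam i * (starRingEnd ℂ) (lam j) *
        (if 2 ≤ n then (c n : ℂ) * (n : ℂ) ^ (-(pts i) - (starRingEnd ℂ) (pts j)) else 0) := by
    intro i
    rw [Summable.tsum_finsetSum fun j _ => ((hf i j).mul_left _)]
    exact Finset.sum_congr rfl fun j _ => tsum_mul_left.symm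
  simp_rw [h1]
  rw [← Summable.tsum_finsetSum fun i _ => summable_sum fun j _ => ((hf i j).mul_left _)]
  rw [Complex.ofReal_tsum]
  refine tsum_congr fun n => ?_
  by_cases hn : 2 ≤ n
  · simp only [if_pos hn]
    have hn0 : (n : ℂ) ≠ 0 := Nat.cast_ne_zero.mpr (by omega)
    have hconj : ∀ s : ℂ, (n : ℂ) ^ (-((starRingEnd ℂ) s)) = (starRingEnd ℂ) ((n : ℂ) ^ (-s)) := by
      intro s
      rw [Complex.cpow_def_of_ne_zero hn0, Complex.cpow_def_of_ne_zero hn0, ← Complex.exp_conj,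
        map_mul, map_neg, ← Complex.natCast_log, Complex.conj_ofReal]
    have hsplit : ∀ i j : Fin m, (n : ℂ) ^ (-(pts i) - (starRingEnd ℂ) (pts j))
        = (n : ℂ) ^ (-(pts i)) * (starRingEnd ℂ) ((n : ℂ) ^ (-(pts j))) := by
      intro i j
      rw [sub_eq_add_neg, Complex.cpow_add _ _ hn0, hconj]
    calc ∑ i, ∑ j, lam i * (starRingEnd ℂ) (lam j) *
          ((c n : ℂ) * (n : ℂ) ^ (-(pts i) - (starRingEnd ℂ) (pts j)))
        = (c n : ℂ) * ((∑ i, lam i * (n : ℂ) ^ (-(pts i))) *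
            (starRingEnd ℂ) (∑ i, lam i * (n : ℂ) ^ (-(pts i)))) := by
          simp only [hsplit, map_sum, map_mul]
          rw [Finset.sum_mul_sum, Finset.mul_sum]
          apply Finset.sum_congr rfl
          intro i _
          rw [Finset.mul_sum]
          apply Finset.sum_congr rfl
          intro j _
          ring
      _ = _ := by rw [Complex.mul_conj]; push_cast; ring
  · simp [hn]


set_option maxHeartbeats 2000000 in
theorem stmt_17 (c : ℕ → ℝ) (β : ℝ)
    (habs : ∀ s u : ℂ, β < s.re → β < u.re →
      Summable (fun n : ℕ =>
        ‖(if 2 ≤ n then (c n : ℂ) * (n : ℂ) ^ (-s - (starRingEnd ℂ) u) else 0)‖)) :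
    (∀ (m : ℕ) (pts : Fin m → ℂ), (∀ i, β < (pts i).re) → ∀ lam : Fin m → ℂ,
      0 ≤ ∑ i, ∑ j, lam i * (starRingEnd ℂ) (lam j) *
        ∑' n : ℕ, (if 2 ≤ n
          then (c n : ℂ) * (n : ℂ) ^ (-(pts i) - (starRingEnd ℂ) (pts j)) else 0))
    ↔ (∀ n : ℕ, 2 ≤ n → 0 ≤ c n) := by
  constructor
  · intro h n0 hn0
    set σ : ℝ := β + 1 with hσdef
    have hσβ : β < (↑σ : ℂ).re := by simp [hσdef]
    have hn0R : (1:ℝ) ≤ (n0:ℝ) := by exact_mod_cast Nat.one_le_of_lt hn0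
    have hn0pos : (0:ℝ) < (n0:ℝ) := by linarith
    have hlogn0 : 0 ≤ Real.log n0 := Real.log_nonneg hn0R
    set A : ℕ → ℝ := fun n => if 2 ≤ n then |c n| * (n:ℝ) ^ (-(2*σ)) else 0 with hAdef
    have hA0 : ∀ n, 0 ≤ A n := by
      intro n
      by_cases hn : 2 ≤ n
      · simp only [hAdef, if_pos hn]
        positivity
      · simp [hAdef, hn]
    have hAsum : Summable A := by
      have h0 := habs (σ:ℂ) (σ:ℂ) hσβ hσβ
      refine (summable_congr ?_).mp h0
      intro n
      by_cases hn : 2 ≤ n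
      · have hnpos : (0:ℝ) < (n:ℝ) := by
          have : (2:ℝ) ≤ (n:ℝ) := by exact_mod_cast hn
          linarith
        have he : (-(σ:ℂ) - (starRingEnd ℂ) (σ:ℂ)) = ((-(2*σ) : ℝ) : ℂ) := by
          rw [Complex.conj_ofReal]; push_cast; ring
        simp only [hAdef, if_pos hn, he]
        rw [norm_mul, Complex.norm_real, Real.norm_eq_abs,
          show ((n:ℕ):ℂ) = (((n:ℝ)):ℂ) by push_cast; rfl,
          Complex.norm_cpow_eq_rpow_re_of_pos hnpos, Complex.ofReal_re]
      · simp [hAdef, hn]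
    have main : ∀ ε : ℝ, 0 < ε → -(2*ε) ≤ c n0 * (n0:ℝ) ^ (-(2*σ)) := by
      intro ε hε
      obtain ⟨M, hMlt, hMge⟩ :=
        (((tendsto_sum_nat_add A).eventually (gt_mem_nhds hε)).and
          (Filter.eventually_ge_atTop (n0 + 1))).exists
      set N : ℕ := M - 1 with hNdef
      have hMN : M = N + 1 := by omega
      have hn0N : n0 ≤ N := by omega
      have hNR : (1:ℝ) ≤ (N:ℝ) := by
        have : 1 ≤ N := by omega
        exact_mod_cast this
      have hlogN : 0 ≤ Real.log N := Real.log_nonneg hNR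
      have hdpos : 0 < Real.log N + Real.log n0 + 1 := by linarith
      set t : ℝ := Real.pi / (Real.log N + Real.log n0 + 1) with htdef
      have htpos : 0 < t := div_pos Real.pi_pos hdpos
      set w : ℕ → ℂ := fun n => Complex.exp (Complex.I * ((t * (Real.log n0 - Real.log n) : ℝ) : ℂ))
        with hwdef
      have habsI : ∀ x : ℝ, ‖Complex.exp (Complex.I * (x:ℂ))‖ = 1 := by
        intro x
        rw [Complex.norm_exp]
        simp
      have hwabs : ∀ n, ‖w n‖ = 1 := fun n => habsI _
      have hwn0 : w n0 = 1 := by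
        rw [hwdef]
        simp only [sub_self, mul_zero, Complex.ofReal_zero, Complex.exp_zero]
      have hw1 : ∀ n : ℕ, 2 ≤ n → n ≤ N → n ≠ n0 → w n ≠ 1 := by
        intro n h2 hle hne heq
        rw [hwdef, Complex.exp_eq_one_iff] at heq
        obtain ⟨k, hk⟩ := heq
        have hk2 : Complex.I * ((t * (Real.log n0 - Real.log n) : ℝ) : ℂ)
            = Complex.I * ((k:ℂ) * (2 * (Real.pi:ℂ))) := by rw [hk]; ring
        have hk3 : ((t * (Real.log n0 - Real.log n) : ℝ) : ℂ) = ((k:ℝ) * (2 * Real.pi) : ℝ) := by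
          have := mul_left_cancel₀ Complex.I_ne_zero hk2
          rw [this]; push_cast; ring
        have hx : t * (Real.log n0 - Real.log n) = (k:ℝ) * (2 * Real.pi) :=
          Complex.ofReal_injective hk3
        have hnR : (2:ℝ) ≤ (n:ℝ) := by exact_mod_cast h2
        have hlogn : 0 ≤ Real.log n := Real.log_nonneg (by linarith)
        have hlognN : Real.log n ≤ Real.log N := by
          apply Real.log_le_log (by linarith)
          exact_mod_cast hle
        have hDne : Real.log n0 - Real.log n ≠ 0 := by
          rcases lt_trichotomy n n0 with hlt | heqn | hgt
          · have : Real.log n < Real.log n0 := Real.log_lt_log (by linarith) (by exact_mod_cast hlt)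
            linarith
          · exact absurd heqn hne
          · have : Real.log n0 < Real.log n := Real.log_lt_log (by linarith) (by exact_mod_cast hgt)
            linarith
        have habsD : |Real.log n0 - Real.log n| ≤ Real.log n0 + Real.log N := by
          rw [abs_le]; constructor <;> linarith
        have hxlt : |t * (Real.log n0 - Real.log n)| < Real.pi := by
          rw [abs_mul, abs_of_pos htpos]
          calc t * |Real.log n0 - Real.log n| ≤ t * (Real.log n0 + Real.log N) := by
                apply mul_le_mul_of_nonneg_left habsD (le_of_lt htpos)
            _ < Real.pi := by
                rw [htdef, div_mul_eq_mul_div, div_lt_iff₀ hdpos]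
                nlinarith [Real.pi_pos]
        have hk0 : k ≠ 0 := by
          rintro rfl
          simp at hx
          rcases hx with h | h
          · linarith
          · exact hDne h
        have hk1 : (1:ℝ) ≤ |(k:ℝ)| := by
          have : (1:ℤ) ≤ |k| := Int.one_le_abs hk0
          calc (1:ℝ) = ((1:ℤ):ℝ) := by norm_num
            _ ≤ ((|k|:ℤ):ℝ) := by exact_mod_cast this
            _ = |(k:ℝ)| := by push_cast; ring
        rw [hx, abs_mul] at hxlt
        have h2pi : |(2 * Real.pi : ℝ)| = 2 * Real.pi := abs_of_pos (by positivity)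
        rw [h2pi] at hxlt
        nlinarith [Real.pi_pos]
      set C : ℝ := ∑ n ∈ Finset.range (N+1), A n * (2 / ‖1 - w n‖)^2 with hCdef
      have hC0 : 0 ≤ C := Finset.sum_nonneg fun n _ => mul_nonneg (hA0 n) (sq_nonneg _)
      obtain ⟨m, hm1, hmC⟩ : ∃ m : ℕ, 1 ≤ m ∧ C ≤ ε * (m:ℝ)^2 := by
        refine ⟨max 1 ⌈C / ε⌉₊, le_max_left _ _, ?_⟩
        have h1 : (1:ℝ) ≤ ((max 1 ⌈C / ε⌉₊ : ℕ) : ℝ) := by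
          exact_mod_cast le_max_left 1 ⌈C / ε⌉₊
        have h2 : C / ε ≤ ((max 1 ⌈C / ε⌉₊ : ℕ) : ℝ) :=
          le_trans (Nat.le_ceil _) (by exact_mod_cast le_max_right 1 ⌈C / ε⌉₊)
        have h3 : C ≤ ε * ((max 1 ⌈C / ε⌉₊ : ℕ) : ℝ) := by
          rw [div_le_iff₀ hε] at h2; linarith
        nlinarith
      set pts : Fin m → ℂ := fun j => (σ:ℂ) + Complex.I * ((t * (j:ℕ) : ℝ) : ℂ) with hptsdef
      set lam : Fin m → ℂ := fun j =>
        Complex.exp (Complex.I * ((t * (j:ℕ) * Real.log n0 : ℝ) : ℂ)) with hlamdef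
      have hpts : ∀ j, β < (pts j).re := by
        intro j
        rw [hptsdef]
        simp [hσdef, Complex.mul_re]
      set S : ℕ → ℂ := fun n => ∑ i : Fin m, (w n)^(i:ℕ) with hSdef
      have hD : ∀ n : ℕ, 2 ≤ n →
          (∑ i : Fin m, lam i * (n:ℂ) ^ (-(pts i))) = (((n:ℝ) ^ (-σ) : ℝ) : ℂ) * S n := by
        intro n hn
        have hnpos : (0:ℝ) < (n:ℝ) := by
          have : (2:ℝ) ≤ (n:ℝ) := by exact_mod_cast hn
          linarith
        have hn0' : (n:ℂ) ≠ 0 := Nat.cast_ne_zero.mpr (by omega)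
        rw [hSdef, Finset.mul_sum]
        apply Finset.sum_congr rfl
        intro i _
        rw [hlamdef, hptsdef]
        rw [Complex.cpow_def_of_ne_zero hn0', ← Complex.natCast_log, ← Complex.exp_add]
        rw [← Complex.exp_nat_mul, Real.rpow_def_of_pos hnpos, Complex.ofReal_exp,
          ← Complex.exp_add]
        congr 1
        push_cast
        ring
      have hnormD : ∀ n : ℕ, 2 ≤ n →
          Complex.normSq (∑ i : Fin m, lam i * (n:ℂ) ^ (-(pts i)))
            = (n:ℝ) ^ (-(2*σ)) * Complex.normSq (S n) := by
        intro n hn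
        have hnpos : (0:ℝ) < (n:ℝ) := by
          have : (2:ℝ) ≤ (n:ℝ) := by exact_mod_cast hn
          linarith
        rw [hD n hn, Complex.normSq_mul, Complex.normSq_ofReal]
        rw [show (n:ℝ)^(-σ) * ((n:ℝ)^(-σ)) = (n:ℝ)^(-(2*σ)) by
          rw [← Real.rpow_add hnpos]; congr 1; ring]
      set r : ℕ → ℝ := fun n => if 2 ≤ n then
          c n * Complex.normSq (∑ i : Fin m, lam i * (n:ℂ) ^ (-(pts i))) else 0 with hrdef
      have hrabs : ∀ n, |r n| = A n * Complex.normSq (S n) := by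
        intro n
        by_cases hn : 2 ≤ n
        · rw [hrdef]
          simp only [if_pos hn]
          rw [abs_mul, abs_of_nonneg (Complex.normSq_nonneg _), hnormD n hn, hAdef]
          simp only [if_pos hn]
          ring
        · rw [hrdef, hAdef]
          simp [hn]
      have hSabs : ∀ n, ‖S n‖ ≤ (m:ℝ) := by
        intro n
        calc ‖S n‖ ≤ ∑ i : Fin m, ‖(w n)^(i:ℕ)‖ := norm_sum_le _ _
          _ = ∑ _i : Fin m, (1:ℝ) := by
              apply Finset.sum_congr rfl
              intro i _
              rw [norm_pow, hwabs, one_pow]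
          _ = m := by simp
      have hnormSqle : ∀ n, Complex.normSq (S n) ≤ (m:ℝ)^2 := by
        intro n
        rw [Complex.normSq_eq_norm_sq]
        exact pow_le_pow_left₀ (norm_nonneg _) (hSabs n) 2
      have hhead : ∀ n : ℕ, 2 ≤ n → n ≤ N → n ≠ n0 →
          Complex.normSq (S n) ≤ (2 / ‖1 - w n‖)^2 := by
        intro n h2 hle hne
        have hwne := hw1 n h2 hle hne
        have habs_pos : 0 < ‖1 - w n‖ := by
          rw [norm_pos_iff]
          exact sub_ne_zero.mpr (Ne.symm hwne)
        have hSeq : S n = ((w n)^m - 1)/(w n - 1) := by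
          rw [hSdef]
          show (∑ i : Fin m, w n ^ (i:ℕ)) = _
          rw [Fin.sum_univ_eq_sum_range (fun i => (w n)^i) m]
          exact geom_sum_eq hwne m
        have hnum : ‖(w n)^m - 1‖ ≤ 2 := by
          calc ‖(w n)^m - 1‖ ≤ ‖(w n)^m‖ + ‖(1:ℂ)‖ := norm_sub_le _ _
            _ = 2 := by
                rw [norm_pow, hwabs, one_pow, norm_one]
                norm_num
        have hle2 : ‖S n‖ ≤ 2 / ‖1 - w n‖ := by
          rw [hSeq, norm_div, norm_sub_rev (w n) 1]
          exact (div_le_div_iff_of_pos_right habs_pos).mpr hnum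
        rw [Complex.normSq_eq_norm_sq]
        exact pow_le_pow_left₀ (norm_nonneg _) hle2 2
      have hsum : ∀ i j : Fin m, Summable (fun n : ℕ =>
          ‖(if 2 ≤ n then (c n : ℂ) * (n : ℂ) ^ (-(pts i) - (starRingEnd ℂ) (pts j)) else 0)‖) :=
        fun i j => habs _ _ (hpts i) (hpts j)
      have hpos := h m pts hpts lam
      rw [key17 c pts lam hsum, Complex.zero_le_real] at hpos
      have hposr : 0 ≤ ∑' n, r n := hpos
      have hrn0 : r n0 = c n0 * ((n0:ℝ) ^ (-(2*σ)) * (m:ℝ)^2) := by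
        have hSn0 : S n0 = ((m:ℝ):ℂ) := by
          rw [hSdef]
          show (∑ i : Fin m, w n0 ^ (i:ℕ)) = _
          rw [hwn0]
          simp
        rw [hrdef]
        show (if 2 ≤ n0 then c n0 * Complex.normSq (∑ i : Fin m, lam i * (n0:ℂ) ^ (-(pts i)))
          else 0) = _
        rw [if_pos hn0, hnormD n0 hn0, hSn0, Complex.normSq_ofReal]
        ring
      have hr_sum : Summable r := by
        apply Summable.of_norm_bounded (g := fun n => A n * (m:ℝ)^2) (hAsum.mul_right _)
        intro n
        rw [Real.norm_eq_abs, hrabs n]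
        exact mul_le_mul_of_nonneg_left (hnormSqle n) (hA0 n)
      set g : ℕ → ℝ := fun n => if n = n0 then 0 else A n * Complex.normSq (S n) with hgdef
      have hg0 : ∀ n, 0 ≤ g n := by
        intro n
        rw [hgdef]
        by_cases hh : n = n0
        · simp [hh]
        · show (0:ℝ) ≤ if n = n0 then 0 else A n * Complex.normSq (S n)
          rw [if_neg hh]
          exact mul_nonneg (hA0 n) (Complex.normSq_nonneg _)
      have hgle : ∀ n, g n ≤ A n * (m:ℝ)^2 := by
        intro n
        rw [hgdef]
        show (if n = n0 then 0 else A n * Complex.normSq (S n)) ≤ _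
        by_cases hh : n = n0
        · rw [if_pos hh]
          exact mul_nonneg (hA0 n) (sq_nonneg _)
        · rw [if_neg hh]
          exact mul_le_mul_of_nonneg_left (hnormSqle n) (hA0 n)
      have hg_sum : Summable g :=
        Summable.of_norm_bounded (hAsum.mul_right _) (fun n => by
          rw [Real.norm_eq_abs, abs_of_nonneg (hg0 n)]
          exact hgle n)
      have hrg : ∀ n, (if n = n0 then 0 else r n) ≤ g n := by
        intro n
        by_cases hh : n = n0
        · rw [if_pos hh]
          exact hg0 n
        · rw [if_neg hh, hgdef]
          show r n ≤ if n = n0 then 0 else A n * Complex.normSq (S n)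
          rw [if_neg hh, ← hrabs n]
          exact le_abs_self _
      have hite_sum : Summable (fun n => if n = n0 then 0 else r n) :=
        Summable.of_norm_bounded hr_sum.abs (fun n => by
          by_cases hh : n = n0 <;> simp [hh, Real.norm_eq_abs, abs_nonneg])
      have step1 : 0 ≤ r n0 + ∑' n, (if n = n0 then 0 else r n) := by
        rw [← Summable.tsum_eq_add_tsum_ite hr_sum n0]
        exact hposr
      have step2 : (∑' n, (if n = n0 then 0 else r n)) ≤ ∑' n, g n :=
        Summable.tsum_le_tsum hrg hite_sum hg_sum
      have step3 : (∑' n, g n) ≤ C + ε * (m:ℝ)^2 := by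
        rw [← Summable.sum_add_tsum_nat_add (N+1) hg_sum]
        apply add_le_add
        · rw [hCdef]
          apply Finset.sum_le_sum
          intro n hn
          have hnN : n ≤ N := by
            rw [Finset.mem_range] at hn
            omega
          rw [hgdef]
          show (if n = n0 then 0 else A n * Complex.normSq (S n)) ≤ _
          by_cases hh : n = n0
          · rw [if_pos hh]
            exact mul_nonneg (hA0 n) (sq_nonneg _)
          · rw [if_neg hh]
            by_cases h2 : 2 ≤ n
            · exact mul_le_mul_of_nonneg_left (hhead n h2 hnN hh) (hA0 n)
            · have hA0' : A n = 0 := by rw [hAdef]; simp [h2]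
              rw [hA0']
              simp
        · have hAt : Summable (fun k => A (k + (N+1))) := (summable_nat_add_iff (N+1)).mpr hAsum
          have hgt : Summable (fun k => g (k + (N+1))) := (summable_nat_add_iff (N+1)).mpr hg_sum
          calc (∑' k, g (k + (N+1))) ≤ ∑' k, A (k + (N+1)) * (m:ℝ)^2 :=
                Summable.tsum_le_tsum (fun k => hgle _) hgt (hAt.mul_right _)
            _ = (∑' k, A (k + (N+1))) * (m:ℝ)^2 := tsum_mul_right
            _ ≤ ε * (m:ℝ)^2 := by
                apply mul_le_mul_of_nonneg_right _ (sq_nonneg _)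
                rw [hMN] at hMlt
                exact le_of_lt hMlt
      have hm2 : (0:ℝ) < (m:ℝ)^2 := by
        have : (1:ℝ) ≤ (m:ℝ) := by exact_mod_cast hm1
        nlinarith
      have hfin : -(2*ε) * (m:ℝ)^2 ≤ (c n0 * (n0:ℝ)^(-(2*σ))) * (m:ℝ)^2 := by
        have h4 : -(C + ε * (m:ℝ)^2) ≤ r n0 := by linarith
        rw [hrn0] at h4
        nlinarith
      exact (mul_le_mul_iff_of_pos_right hm2).mp hfin
    have hK : (0:ℝ) < (n0:ℝ)^(-(2*σ)) := Real.rpow_pos_of_pos hn0pos _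
    by_contra hneg
    push_neg at hneg
    have hcK : c n0 * (n0:ℝ)^(-(2*σ)) < 0 := mul_neg_of_neg_of_pos hneg hK
    have hmain := main (-(c n0 * (n0:ℝ)^(-(2*σ)))/4) (by linarith)
    linarith
  · intro hc m pts hpts lam
    rw [key17 c pts lam (fun i j => habs _ _ (hpts i) (hpts j))]
    refine Complex.zero_le_real.mpr (tsum_nonneg fun n => ?_)
    by_cases hn : 2 ≤ n
    · rw [if_pos hn]
      exact mul_nonneg (hc n hn) (Complex.normSq_nonneg _)
    · rw [if_neg hn]
end

section
/- If the abscissa δ_w defined by δ_w = inf{ σ ∈ ℝ : for every n, ∑_{j ≥ 2, gpf(j) ≤ p_n} w_j j^{-σ} < ∞ } equals −∞ for a sequence of positive weights w = (w_j)_{j≥2}, then every multiplier of the Hilbert space H_w is constant. -/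
open Filter Topology
open scoped ENNReal

/-- The `j`-th term of the Dirichlet series with coefficients `c` at `s`. -/
noncomputable def dterm (c : ℕ → ℂ) (s : ℂ) (j : ℕ) : ℂ :=
  if 2 ≤ j then c j * (j : ℂ) ^ (-s) else 0

lemma norm_dterm_eq (c : ℕ → ℂ) (s : ℂ) (j : ℕ) :
    ‖dterm c s j‖ = if 2 ≤ j then ‖c j‖ * (j : ℝ) ^ (-s.re) else 0 := by
  unfold dterm
  split_ifs with h
  · rw [norm_mul, Complex.norm_natCast_cpow_of_pos (by omega)]
    simp [Complex.neg_re]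
  · simp

lemma dterm_sub (c d : ℕ → ℂ) (s : ℂ) (j : ℕ) :
    dterm (fun i => c i - d i) s j = dterm c s j - dterm d s j := by
  unfold dterm; split_ifs <;> [ring; ring]

lemma dterm_add (c d : ℕ → ℂ) (s : ℂ) (j : ℕ) :
    dterm (fun i => c i + d i) s j = dterm c s j + dterm d s j := by
  unfold dterm; split_ifs <;> [ring; ring]

lemma dterm_const_mul (a : ℂ) (c : ℕ → ℂ) (s : ℂ) (j : ℕ) :
    dterm (fun i => a * c i) s j = a * dterm c s j := by
  unfold dterm; split_ifs <;> [ring; ring]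

lemma dterm_congr {c d : ℕ → ℂ} (h : ∀ j, 2 ≤ j → c j = d j) (s : ℂ) (j : ℕ) :
    dterm c s j = dterm d s j := by
  unfold dterm; split_ifs with hh
  · rw [h j hh]
  · rfl

/-- Absolute convergence of the Dirichlet series of an `H_w` element on `Re s ≥ σw/2`. -/
lemma summable_norm_dterm {w : ℕ → ℝ} (hw : ∀ j : ℕ, 2 ≤ j → 0 < w j) {σw : ℝ}
    (hσ : Summable fun j : ℕ => if 2 ≤ j then w j * (j : ℝ) ^ (-σw) else 0)
    {c : ℕ → ℂ} (hc : Summable fun j : ℕ => if 2 ≤ j then ‖c j‖ ^ 2 / w j else 0)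
    {s : ℂ} (hs : σw / 2 ≤ s.re) :
    Summable fun j => ‖dterm c s j‖ := by
  have hmaj : Summable fun j : ℕ =>
      ((if 2 ≤ j then ‖c j‖ ^ 2 / w j else 0) + (if 2 ≤ j then w j * (j : ℝ) ^ (-σw) else 0)) / 2 :=
    (hc.add hσ).div_const 2
  refine hmaj.of_nonneg_of_le (fun j => norm_nonneg _) (fun j => ?_)
  rw [norm_dterm_eq]
  split_ifs with h
  · have hj1 : (1:ℝ) ≤ (j:ℝ) := by exact_mod_cast Nat.one_le_of_lt h
    have hj0 : (0:ℝ) < (j:ℝ) := by linarith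
    have hwj := hw j h
    have hsq : Real.sqrt (w j) > 0 := Real.sqrt_pos.mpr hwj
    set x : ℝ := (j:ℝ) ^ (-s.re) with hx
    have hx0 : 0 ≤ x := Real.rpow_nonneg (le_of_lt hj0) _
    have key : 2 * (‖c j‖ / Real.sqrt (w j)) * (Real.sqrt (w j) * x)
        ≤ (‖c j‖ / Real.sqrt (w j)) ^ 2 + (Real.sqrt (w j) * x) ^ 2 :=
      two_mul_le_add_sq _ _
    have e1 : 2 * (‖c j‖ / Real.sqrt (w j)) * (Real.sqrt (w j) * x) = 2 * (‖c j‖ * x) := by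
      field_simp
    have e2 : (‖c j‖ / Real.sqrt (w j)) ^ 2 = ‖c j‖ ^ 2 / w j := by
      rw [div_pow, Real.sq_sqrt hwj.le]
    have e3 : (Real.sqrt (w j) * x) ^ 2 = w j * ((j:ℝ) ^ (-s.re)) ^ 2 := by
      rw [mul_pow, Real.sq_sqrt hwj.le]
    have e4 : ((j:ℝ) ^ (-s.re)) ^ 2 ≤ (j:ℝ) ^ (-σw) := by
      have : ((j:ℝ) ^ (-s.re)) ^ 2 = (j:ℝ) ^ (-s.re + -s.re) := by
        rw [Real.rpow_add hj0]; ring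
      rw [this]
      exact Real.rpow_le_rpow_of_exponent_le hj1 (by linarith)
    have : 2 * (‖c j‖ * x) ≤ ‖c j‖ ^ 2 / w j + w j * (j:ℝ) ^ (-σw) := by
      calc 2 * (‖c j‖ * x) = 2 * (‖c j‖ / Real.sqrt (w j)) * (Real.sqrt (w j) * x) := e1.symm
        _ ≤ (‖c j‖ / Real.sqrt (w j)) ^ 2 + (Real.sqrt (w j) * x) ^ 2 := key
        _ = ‖c j‖ ^ 2 / w j + w j * ((j:ℝ) ^ (-s.re)) ^ 2 := by rw [e2, e3]
        _ ≤ ‖c j‖ ^ 2 / w j + w j * (j:ℝ) ^ (-σw) := by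
            have := mul_le_mul_of_nonneg_left e4 hwj.le
            linarith
    linarith
  · positivity

lemma summable_dterm {w : ℕ → ℝ} (hw : ∀ j : ℕ, 2 ≤ j → 0 < w j) {σw : ℝ}
    (hσ : Summable fun j : ℕ => if 2 ≤ j then w j * (j : ℝ) ^ (-σw) else 0)
    {c : ℕ → ℂ} (hc : Summable fun j : ℕ => if 2 ≤ j then ‖c j‖ ^ 2 / w j else 0)
    {s : ℂ} (hs : σw / 2 ≤ s.re) :
    Summable fun j => dterm c s j :=
  (summable_norm_dterm hw hσ hc hs).of_norm

/-- Uniqueness of coefficients of a Dirichlet series. -/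
lemma dirichlet_unique {σ0 : ℝ} {e : ℕ → ℂ}
    (hsum : ∀ σ : ℝ, σ0 < σ → Summable fun j => ‖dterm e (σ : ℂ) j‖)
    (hzero : ∀ σ : ℝ, σ0 < σ → ∑' j, dterm e (σ : ℂ) j = 0) :
    ∀ j, 2 ≤ j → e j = 0 := by
  intro j
  induction j using Nat.strong_induction_on with
  | _ j ih =>
  intro hj
  set σb : ℝ := σ0 + 1 with hσbdef
  have hσb : σ0 < σb := by simp [hσbdef]
  set K : ℝ := ∑' i, ‖dterm e (σb : ℂ) i‖ with hKdef
  have hj0 : (0:ℝ) < (j:ℝ) := by positivity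
  have hj1 : (1:ℝ) ≤ (j:ℝ) := by exact_mod_cast Nat.one_le_of_lt hj
  have hj10 : (0:ℝ) < (j:ℝ) + 1 := by linarith
  set r : ℝ := (j:ℝ) / ((j:ℝ) + 1) with hrdef
  have hr0 : 0 ≤ r := by positivity
  have hr1 : r < 1 := by
    rw [hrdef, div_lt_one hj10]; linarith
  have hbound : ∀ n : ℕ, ‖e j‖ ≤ K * (j:ℝ) ^ σb * r ^ n := by
    intro n
    set σ : ℝ := σb + n with hσdef
    have hσ0 : σ0 < σ := by
      have : (0:ℝ) ≤ (n:ℕ) := by positivity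
      simp only [hσdef]; push_cast; linarith [Nat.cast_nonneg (α := ℝ) n]
    have hS : Summable fun i => dterm e (σ : ℂ) i := (hsum σ hσ0).of_norm
    have heq := Summable.tsum_eq_add_tsum_ite hS j
    rw [hzero σ hσ0] at heq
    have heq2 : dterm e (σ : ℂ) j = -∑' i, ite (i = j) 0 (dterm e (σ : ℂ) i) := by
      linear_combination -heq
    -- bound the tail
    have hsummaj : Summable fun i : ℕ =>
        (if i ≤ j then 0 else ‖dterm e (σb : ℂ) i‖ * (((j:ℝ) + 1) ^ (-(n:ℝ)))) := by
      have : Summable fun i : ℕ => ‖dterm e (σb : ℂ) i‖ * (((j:ℝ) + 1) ^ (-(n:ℝ))) :=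
        (hsum σb hσb).mul_right _
      refine this.of_nonneg_of_le (fun i => ?_) (fun i => ?_)
      · split_ifs
        · exact le_rfl
        · positivity
      · split_ifs
        · positivity
        · exact le_rfl
    have htail : ‖∑' i, ite (i = j) 0 (dterm e (σ : ℂ) i)‖
        ≤ ∑' i : ℕ, (if i ≤ j then 0 else ‖dterm e (σb : ℂ) i‖ * (((j:ℝ) + 1) ^ (-(n:ℝ)))) := by
      have hsn : Summable fun i => ‖ite (i = j) 0 (dterm e (σ : ℂ) i)‖ := by
        refine (hsum σ hσ0).of_nonneg_of_le (fun i => norm_nonneg _) (fun i => ?_)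
        split_ifs <;> simp [norm_nonneg]
      refine (norm_tsum_le_tsum_norm hsn).trans (Summable.tsum_le_tsum (fun i => ?_) hsn hsummaj)
      by_cases hij : i = j
      · simp [hij]
      rw [if_neg hij]
      by_cases hile : i ≤ j
      · -- term vanishes
        rw [if_pos hile]
        by_cases hi2 : 2 ≤ i
        · have : e i = 0 := ih i (lt_of_le_of_ne hile hij) hi2
          simp [dterm, this]
        · simp [dterm, hi2]
      · rw [if_neg hile]
        push_neg at hile
        have hij1 : (j:ℝ) + 1 ≤ (i:ℝ) := by exact_mod_cast hile
        have hi2 : 2 ≤ i := by omega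
        rw [norm_dterm_eq, norm_dterm_eq, if_pos hi2, if_pos hi2]
        have hi0 : (0:ℝ) < (i:ℝ) := by positivity
        have e1 : (i:ℝ) ^ (-(σ:ℝ)) = (i:ℝ) ^ (-(σb:ℝ)) * (i:ℝ) ^ (-(n:ℝ)) := by
          rw [← Real.rpow_add hi0]; congr 1; simp [hσdef]; ring
        have e2 : (i:ℝ) ^ (-(n:ℝ)) ≤ ((j:ℝ) + 1) ^ (-(n:ℝ)) := by
          rw [Real.rpow_neg hi0.le, Real.rpow_neg hj10.le]
          exact inv_anti₀ (Real.rpow_pos_of_pos hj10 _)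
            (Real.rpow_le_rpow hj10.le hij1 (Nat.cast_nonneg n))
        calc ‖e i‖ * (i:ℝ) ^ (-(σ:ℝ))
            = ‖e i‖ * (i:ℝ) ^ (-(σb:ℝ)) * (i:ℝ) ^ (-(n:ℝ)) := by rw [e1]; ring
          _ ≤ ‖e i‖ * (i:ℝ) ^ (-(σb:ℝ)) * (((j:ℝ) + 1) ^ (-(n:ℝ))) := by
              have h0 : 0 ≤ ‖e i‖ * (i:ℝ) ^ (-(σb:ℝ)) := by positivity
              exact mul_le_mul_of_nonneg_left e2 h0
    have htsum_eq : ∑' i : ℕ, (if i ≤ j then 0 else ‖dterm e (σb : ℂ) i‖ * (((j:ℝ) + 1) ^ (-(n:ℝ))))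
        ≤ K * (((j:ℝ) + 1) ^ (-(n:ℝ))) := by
      have h1 : ∀ i : ℕ, (if i ≤ j then 0 else ‖dterm e (σb : ℂ) i‖ * (((j:ℝ) + 1) ^ (-(n:ℝ))))
          = (if i ≤ j then 0 else ‖dterm e (σb : ℂ) i‖) * (((j:ℝ) + 1) ^ (-(n:ℝ))) := by
        intro i; split_ifs <;> simp
      calc ∑' i : ℕ, (if i ≤ j then 0 else ‖dterm e (σb : ℂ) i‖ * (((j:ℝ) + 1) ^ (-(n:ℝ))))
          = (∑' i : ℕ, (if i ≤ j then 0 else ‖dterm e (σb : ℂ) i‖)) * (((j:ℝ) + 1) ^ (-(n:ℝ))) := by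
            rw [← tsum_mul_right]; exact tsum_congr h1
        _ ≤ K * (((j:ℝ) + 1) ^ (-(n:ℝ))) := by
            have hle : (∑' i : ℕ, (if i ≤ j then 0 else ‖dterm e (σb : ℂ) i‖)) ≤ K := by
              refine Summable.tsum_le_tsum (fun i => ?_) ?_ (hsum σb hσb)
              · split_ifs <;> simp [norm_nonneg]
              · refine (hsum σb hσb).of_nonneg_of_le (fun i => ?_) (fun i => ?_) <;>
                  split_ifs <;> simp [norm_nonneg]
            have hp : (0:ℝ) ≤ ((j:ℝ) + 1) ^ (-(n:ℝ)) := Real.rpow_nonneg hj10.le _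
            exact mul_le_mul_of_nonneg_right hle hp
    -- put together
    have hnorm : ‖e j‖ * (j:ℝ) ^ (-(σ:ℝ)) ≤ K * (((j:ℝ) + 1) ^ (-(n:ℝ))) := by
      have : ‖dterm e (σ : ℂ) j‖ = ‖e j‖ * (j:ℝ) ^ (-(σ:ℝ)) := by
        rw [norm_dterm_eq, if_pos hj]; simp
      rw [← this, heq2, norm_neg]
      exact htail.trans htsum_eq
    -- rearrange
    have hPpos : (0:ℝ) < (j:ℝ) ^ (σb:ℝ) := Real.rpow_pos_of_pos hj0 _
    have hQpos : (0:ℝ) < (j:ℝ) ^ n := by positivity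
    have hRpos : (0:ℝ) < ((j:ℝ) + 1) ^ n := by positivity
    have e5 : (j:ℝ) ^ (-(σ:ℝ)) = ((j:ℝ) ^ (σb:ℝ))⁻¹ * ((j:ℝ) ^ n)⁻¹ := by
      rw [hσdef, neg_add, Real.rpow_add hj0, Real.rpow_neg hj0.le, Real.rpow_neg hj0.le,
        Real.rpow_natCast]
    have e6 : ((j:ℝ) + 1) ^ (-(n:ℝ)) = (((j:ℝ) + 1) ^ n)⁻¹ := by
      rw [Real.rpow_neg hj10.le, Real.rpow_natCast]
    rw [e5, e6] at hnorm
    have h7 : ‖e j‖ = ‖e j‖ * (((j:ℝ) ^ (σb:ℝ))⁻¹ * ((j:ℝ) ^ n)⁻¹)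
        * (((j:ℝ) ^ (σb:ℝ)) * ((j:ℝ) ^ n)) := by
      field_simp
    rw [h7]
    calc ‖e j‖ * (((j:ℝ) ^ (σb:ℝ))⁻¹ * ((j:ℝ) ^ n)⁻¹) * (((j:ℝ) ^ (σb:ℝ)) * ((j:ℝ) ^ n))
        ≤ (K * ((((j:ℝ) + 1) ^ n)⁻¹)) * (((j:ℝ) ^ (σb:ℝ)) * ((j:ℝ) ^ n)) :=
          mul_le_mul_of_nonneg_right hnorm (by positivity)
      _ = K * (j:ℝ) ^ (σb:ℝ) * r ^ n := by
          rw [hrdef, div_pow]; field_simp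
  -- take the limit
  have htend : Tendsto (fun n : ℕ => K * (j:ℝ) ^ σb * r ^ n) atTop (𝓝 0) := by
    have := tendsto_pow_atTop_nhds_zero_of_lt_one hr0 hr1
    simpa using this.const_mul (K * (j:ℝ) ^ σb)
  have : ‖e j‖ ≤ 0 := ge_of_tendsto' htend hbound
  simpa using norm_le_zero_iff.mp this


lemma dirichlet_unique₂ {w : ℕ → ℝ} (hw : ∀ j : ℕ, 2 ≤ j → 0 < w j) {σw : ℝ}
    (hσ : Summable fun j : ℕ => if 2 ≤ j then w j * (j : ℝ) ^ (-σw) else 0)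
    {c d : ℕ → ℂ}
    (hc : Summable fun j : ℕ => if 2 ≤ j then ‖c j‖ ^ 2 / w j else 0)
    (hd : Summable fun j : ℕ => if 2 ≤ j then ‖d j‖ ^ 2 / w j else 0)
    (heq : ∀ s : ℂ, σw / 2 < s.re → ∑' j, dterm c s j = ∑' j, dterm d s j) :
    ∀ j, 2 ≤ j → c j = d j := by
  have key : ∀ j, 2 ≤ j → (fun i => c i - d i) j = 0 := by
    refine dirichlet_unique (σ0 := σw / 2) (fun σ hσ' => ?_) (fun σ hσ' => ?_)
    · have hre : σw / 2 ≤ ((σ : ℂ)).re := by simpa using hσ'.le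
      have h1 := summable_norm_dterm hw hσ hc hre
      have h2 := summable_norm_dterm hw hσ hd hre
      refine (h1.add h2).of_nonneg_of_le (fun j => norm_nonneg _) (fun j => ?_)
      rw [dterm_sub]
      exact norm_sub_le _ _
    · have hre : σw / 2 ≤ ((σ : ℂ)).re := by simpa using hσ'.le
      have hre' : σw / 2 < ((σ : ℂ)).re := by simpa using hσ'
      have h1 := (summable_norm_dterm hw hσ hc hre).of_norm
      have h2 := (summable_norm_dterm hw hσ hd hre).of_norm
      calc ∑' j, dterm (fun i => c i - d i) (σ : ℂ) j
          = ∑' j, (dterm c (σ : ℂ) j - dterm d (σ : ℂ) j) := by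
            exact tsum_congr fun j => dterm_sub c d _ j
        _ = (∑' j, dterm c (σ : ℂ) j) - ∑' j, dterm d (σ : ℂ) j := Summable.tsum_sub h1 h2
        _ = 0 := by rw [heq (σ : ℂ) hre']; ring
  intro j hj
  have := key j hj
  simpa [sub_eq_zero] using this

set_option maxHeartbeats 2000000 in
theorem stmt_19 (w : ℕ → ℝ)
    (hw : ∀ j : ℕ, 2 ≤ j → 0 < w j)
    (σw : ℝ)
    (hσ : Summable fun j : ℕ => if 2 ≤ j then w j * (j : ℝ) ^ (-σw) else 0)
    -- δ_w = -∞ : for every σ and every n the truncated series converges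
    (hδ : ∀ σ : ℝ, ∀ n : ℕ,
      Summable fun j : ℕ =>
        if 2 ≤ j ∧ ∀ q ∈ j.primeFactors, q ≤ Nat.nth Nat.Prime n
        then w j * (j : ℝ) ^ (-σ) else 0)
    (φ : ℂ → ℂ)
    -- φ is a multiplier of 𝓗_w
    (hmult : ∀ c : ℕ → ℂ,
      (Summable fun j : ℕ => if 2 ≤ j then ‖c j‖ ^ 2 / w j else 0) →
      ∃ c' : ℕ → ℂ,
        (Summable fun j : ℕ => if 2 ≤ j then ‖c' j‖ ^ 2 / w j else 0) ∧
        ∀ s : ℂ, σw / 2 < s.re →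
          φ s * ∑' j : ℕ, (if 2 ≤ j then c j * (j : ℂ) ^ (-s) else 0)
            = ∑' j : ℕ, (if 2 ≤ j then c' j * (j : ℂ) ^ (-s) else 0)) :
    ∀ s u : ℂ, σw / 2 < s.re → σw / 2 < u.re → φ s = φ u := by
  classical
  -- rephrase the multiplier property in terms of `dterm`
  have hmult' : ∀ c : ℕ → ℂ,
      (Summable fun j : ℕ => if 2 ≤ j then ‖c j‖ ^ 2 / w j else 0) →
      ∃ c' : ℕ → ℂ,
        (Summable fun j : ℕ => if 2 ≤ j then ‖c' j‖ ^ 2 / w j else 0) ∧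
        ∀ s : ℂ, σw / 2 < s.re →
          φ s * ∑' j : ℕ, dterm c s j = ∑' j : ℕ, dterm c' s j := hmult
  -- basic facts
  have hsqw : ∀ j : ℕ, 2 ≤ j → (0:ℝ) < Real.sqrt (w j) := fun j hj => Real.sqrt_pos.mpr (hw j hj)
  have hsqwC : ∀ j : ℕ, 2 ≤ j → ((Real.sqrt (w j) : ℝ) : ℂ) ≠ 0 := fun j hj => by
    exact_mod_cast (hsqw j hj).ne'
  have htp : (0:ℝ) < (2 : ℝ≥0∞).toReal := by norm_num
  have hsq2 : ∀ x : ℝ, x ^ (2 : ℝ≥0∞).toReal = x ^ 2 := fun x => by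
    rw [show (2 : ℝ≥0∞).toReal = ((2:ℕ):ℝ) by norm_num, Real.rpow_natCast]
  -- coefficients of an ℓ² element
  set tc : lp (fun _ : ℕ => ℂ) 2 → ℕ → ℂ :=
    fun u j => if 2 ≤ j then ((Real.sqrt (w j) : ℝ) : ℂ) * u j else 0 with htc
  have hsumcoord : ∀ u : lp (fun _ : ℕ => ℂ) 2, Summable fun j => ‖u j‖ ^ 2 := fun u => by
    have := (lp.memℓp u).summable htp
    simpa [hsq2] using this
  have hnormtsum : ∀ u : lp (fun _ : ℕ => ℂ) 2, ∑' j, ‖u j‖ ^ 2 = ‖u‖ ^ 2 := fun u => by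
    have := lp.norm_rpow_eq_tsum htp u
    simp only [hsq2] at this
    exact this.symm
  have htc_sq : ∀ (u : lp (fun _ : ℕ => ℂ) 2) (j : ℕ),
      (if 2 ≤ j then ‖tc u j‖ ^ 2 / w j else 0) = (if 2 ≤ j then ‖u j‖ ^ 2 else 0) := by
    intro u j
    split_ifs with hj
    · rw [htc]
      simp only
      rw [if_pos hj, norm_mul, Complex.norm_real, Real.norm_eq_abs,
        abs_of_nonneg (Real.sqrt_nonneg _), mul_pow, Real.sq_sqrt (hw j hj).le]
      rw [mul_comm, mul_div_assoc, div_self (hw j hj).ne', mul_one]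
    · rfl
  have hScond : ∀ u : lp (fun _ : ℕ => ℂ) 2,
      Summable fun j => if 2 ≤ j then ‖tc u j‖ ^ 2 / w j else 0 := fun u => by
    rw [show (fun j => if 2 ≤ j then ‖tc u j‖ ^ 2 / w j else 0)
        = (fun j => if 2 ≤ j then ‖u j‖ ^ 2 else 0) from funext (htc_sq u)]
    exact (hsumcoord u).of_nonneg_of_le
      (fun j => by positivity) (fun j => by split_ifs <;> simp [sq_nonneg])
  have hSval : ∀ u : lp (fun _ : ℕ => ℂ) 2,
      (∑' j, if 2 ≤ j then ‖tc u j‖ ^ 2 / w j else 0) ≤ ‖u‖ ^ 2 := fun u => by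
    rw [show (fun j => if 2 ≤ j then ‖tc u j‖ ^ 2 / w j else 0)
        = (fun j => if 2 ≤ j then ‖u j‖ ^ 2 else 0) from funext (htc_sq u), ← hnormtsum u]
    refine Summable.tsum_le_tsum (fun j => ?_) ?_ (hsumcoord u)
    · split_ifs <;> simp [sq_nonneg]
    · exact (hsumcoord u).of_nonneg_of_le
        (fun j => by positivity) (fun j => by split_ifs <;> simp [sq_nonneg])
  -- the operator on coefficients
  choose Dc hD1 hD2 using fun u : lp (fun _ : ℕ => ℂ) 2 => hmult' (tc u) (hScond u)
  -- the operator T on ℓ²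
  have hmemT : ∀ u : lp (fun _ : ℕ => ℂ) 2,
      Memℓp (fun j : ℕ => if 2 ≤ j then Dc u j / ((Real.sqrt (w j) : ℝ) : ℂ) else 0) 2 := by
    intro u
    apply memℓp_gen
    have : (fun j : ℕ => ‖if 2 ≤ j then Dc u j / ((Real.sqrt (w j) : ℝ) : ℂ) else 0‖ ^ (2 : ℝ≥0∞).toReal)
        = fun j => if 2 ≤ j then ‖Dc u j‖ ^ 2 / w j else 0 := by
      funext j
      rw [hsq2]
      split_ifs with hj
      · rw [norm_div, Complex.norm_real, Real.norm_eq_abs, abs_of_nonneg (Real.sqrt_nonneg _),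
          div_pow, Real.sq_sqrt (hw j hj).le]
      · simp
    rw [this]
    exact hD1 u
  set Tf : lp (fun _ : ℕ => ℂ) 2 → lp (fun _ : ℕ => ℂ) 2 :=
    fun u => ⟨fun j : ℕ => if 2 ≤ j then Dc u j / ((Real.sqrt (w j) : ℝ) : ℂ) else 0, hmemT u⟩
    with hTf
  have hTf_apply : ∀ (u : lp (fun _ : ℕ => ℂ) 2) (j : ℕ),
      Tf u j = if 2 ≤ j then Dc u j / ((Real.sqrt (w j) : ℝ) : ℂ) else 0 := fun u j => rfl
  have htcTf : ∀ (u : lp (fun _ : ℕ => ℂ) 2) (s : ℂ) (j : ℕ),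
      dterm (tc (Tf u)) s j = dterm (Dc u) s j := by
    intro u s j
    refine dterm_congr (fun i hi => ?_) s j
    rw [htc]
    simp only [hTf_apply, hi, if_true]
    rw [mul_div_cancel₀ _ (hsqwC i hi)]
  -- defining identity of T
  have hTid : ∀ (u : lp (fun _ : ℕ => ℂ) 2) (s : ℂ), σw / 2 < s.re →
      φ s * ∑' j, dterm (tc u) s j = ∑' j, dterm (tc (Tf u)) s j := by
    intro u s hs
    rw [show ∑' j, dterm (tc (Tf u)) s j = ∑' j, dterm (Dc u) s j
      from tsum_congr (htcTf u s)]
    exact hD2 u s hs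
  -- uniqueness wrapper
  have huniq : ∀ c d : ℕ → ℂ,
      (Summable fun j => if 2 ≤ j then ‖c j‖ ^ 2 / w j else 0) →
      (Summable fun j => if 2 ≤ j then ‖d j‖ ^ 2 / w j else 0) →
      (∀ s : ℂ, σw / 2 < s.re → ∑' j, dterm c s j = ∑' j, dterm d s j) →
      ∀ j, 2 ≤ j → c j = d j := fun c d hc hd heq => dirichlet_unique₂ hw hσ hc hd heq
  -- coefficientwise operations
  have htc_add : ∀ (u v : lp (fun _ : ℕ => ℂ) 2) (j : ℕ), tc (u + v) j = tc u j + tc v j := by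
    intro u v j
    rw [htc]
    simp only [lp.coeFn_add, Pi.add_apply]
    split_ifs with hj
    · ring
    · ring
  have htc_sub : ∀ (u v : lp (fun _ : ℕ => ℂ) 2) (j : ℕ), tc (u - v) j = tc u j - tc v j := by
    intro u v j
    rw [htc]
    simp only [lp.coeFn_sub, Pi.sub_apply]
    split_ifs with hj
    · ring
    · ring
  have htc_smul : ∀ (a : ℂ) (u : lp (fun _ : ℕ => ℂ) 2) (j : ℕ), tc (a • u) j = a * tc u j := by
    intro a u j
    rw [htc]
    simp only [lp.coeFn_smul, Pi.smul_apply, smul_eq_mul]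
    split_ifs with hj
    · ring
    · ring
  -- additivity of T
  have hTadd : ∀ u v : lp (fun _ : ℕ => ℂ) 2, Tf (u + v) = Tf u + Tf v := by
    intro u v
    have hsumd : Summable fun j => if 2 ≤ j then ‖Dc u j + Dc v j‖ ^ 2 / w j else 0 := by
      refine (((hD1 u).mul_left 2).add ((hD1 v).mul_left 2)).of_nonneg_of_le
        (fun j => by
          split_ifs with hj
          · exact div_nonneg (by positivity) (hw j hj).le
          · exact le_rfl)
        (fun j => ?_)
      split_ifs with hj
      · have hwj := hw j hj
        have key : ‖Dc u j + Dc v j‖ ^ 2 ≤ 2 * ‖Dc u j‖ ^ 2 + 2 * ‖Dc v j‖ ^ 2 := by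
          nlinarith [norm_add_le (Dc u j) (Dc v j), sq_nonneg (‖Dc u j‖ - ‖Dc v j‖),
            norm_nonneg (Dc u j), norm_nonneg (Dc v j), norm_nonneg (Dc u j + Dc v j)]
        calc ‖Dc u j + Dc v j‖ ^ 2 / w j ≤ (2 * ‖Dc u j‖ ^ 2 + 2 * ‖Dc v j‖ ^ 2) / w j :=
              (div_le_div_iff_of_pos_right hwj).mpr key
          _ = 2 * (‖Dc u j‖ ^ 2 / w j) + 2 * (‖Dc v j‖ ^ 2 / w j) := by ring
      · simp
    have hderiv : ∀ j, 2 ≤ j → Dc (u + v) j = Dc u j + Dc v j := by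
      refine huniq _ _ (hD1 _) hsumd (fun s hs => ?_)
      have hre : σw / 2 ≤ s.re := hs.le
      have hsu := summable_dterm hw hσ (hScond u) hre
      have hsv := summable_dterm hw hσ (hScond v) hre
      have hsDu := summable_dterm hw hσ (hD1 u) hre
      have hsDv := summable_dterm hw hσ (hD1 v) hre
      calc ∑' j, dterm (Dc (u + v)) s j
          = φ s * ∑' j, dterm (tc (u + v)) s j := (hD2 (u + v) s hs).symm
        _ = φ s * ∑' j, (dterm (tc u) s j + dterm (tc v) s j) := by
            congr 1
            refine tsum_congr fun j => ?_
            rw [← dterm_add]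
            exact dterm_congr (fun i _ => htc_add u v i) s j
        _ = φ s * (∑' j, dterm (tc u) s j) + φ s * (∑' j, dterm (tc v) s j) := by
            rw [Summable.tsum_add hsu hsv]; ring
        _ = (∑' j, dterm (Dc u) s j) + ∑' j, dterm (Dc v) s j := by
            rw [hD2 u s hs, hD2 v s hs]
        _ = ∑' j, (dterm (Dc u) s j + dterm (Dc v) s j) := (Summable.tsum_add hsDu hsDv).symm
        _ = ∑' j, dterm (fun i => Dc u i + Dc v i) s j :=
            tsum_congr fun j => (dterm_add _ _ _ _).symm
    apply lp.ext
    funext j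
    have hco : (↑(Tf u + Tf v) : ℕ → ℂ) j = Tf u j + Tf v j := by
      rw [lp.coeFn_add]; rfl
    rw [hco, hTf_apply, hTf_apply, hTf_apply]
    by_cases hj : 2 ≤ j
    · simp only [hj, if_true]
      rw [hderiv j hj, add_div]
    · simp [hj]
  -- homogeneity of T
  have hTsmul : ∀ (a : ℂ) (u : lp (fun _ : ℕ => ℂ) 2), Tf (a • u) = a • Tf u := by
    intro a u
    have hsumd : Summable fun j => if 2 ≤ j then ‖a * Dc u j‖ ^ 2 / w j else 0 := by
      have : (fun j => if 2 ≤ j then ‖a * Dc u j‖ ^ 2 / w j else 0)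
          = fun j => ‖a‖ ^ 2 * (if 2 ≤ j then ‖Dc u j‖ ^ 2 / w j else 0) := by
        funext j
        split_ifs with hj
        · rw [norm_mul, mul_pow]; ring
        · simp
      rw [this]
      exact (hD1 u).mul_left _
    have hderiv : ∀ j, 2 ≤ j → Dc (a • u) j = a * Dc u j := by
      refine huniq _ _ (hD1 _) hsumd (fun s hs => ?_)
      calc ∑' j, dterm (Dc (a • u)) s j
          = φ s * ∑' j, dterm (tc (a • u)) s j := (hD2 (a • u) s hs).symm
        _ = φ s * ∑' j, (a * dterm (tc u) s j) := by
            congr 1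
            refine tsum_congr fun j => ?_
            rw [← dterm_const_mul]
            exact dterm_congr (fun i _ => htc_smul a u i) s j
        _ = a * (φ s * ∑' j, dterm (tc u) s j) := by rw [tsum_mul_left]; ring
        _ = a * ∑' j, dterm (Dc u) s j := by rw [hD2 u s hs]
        _ = ∑' j, (a * dterm (Dc u) s j) := tsum_mul_left.symm
        _ = ∑' j, dterm (fun i => a * Dc u i) s j :=
            tsum_congr fun j => (dterm_const_mul _ _ _ _).symm
    apply lp.ext
    funext j
    have hco : (↑(a • Tf u) : ℕ → ℂ) j = a * Tf u j := by
      rw [lp.coeFn_smul]; rfl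
    rw [hco, hTf_apply, hTf_apply]
    by_cases hj : 2 ≤ j
    · simp only [hj, if_true]
      rw [hderiv j hj, mul_div_assoc]
    · simp [hj]
  -- the linear map
  set TL : lp (fun _ : ℕ => ℂ) 2 →ₗ[ℂ] lp (fun _ : ℕ => ℂ) 2 :=
    { toFun := Tf, map_add' := hTadd, map_smul' := hTsmul } with hTL
  -- the constant κ0
  set κ0 : ℝ := ∑' j, (if 2 ≤ j then w j * (j:ℝ) ^ (-σw) else 0) with hκ0def
  have hκ0term_nn : ∀ j : ℕ, 0 ≤ (if 2 ≤ j then w j * (j:ℝ) ^ (-σw) else 0) := by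
    intro j
    split_ifs with hj
    · exact mul_nonneg (hw j hj).le (Real.rpow_nonneg (by positivity) _)
    · exact le_rfl
  have hκ0nn : 0 ≤ κ0 := tsum_nonneg hκ0term_nn
  -- the key quantitative bound for evaluations
  have hkey : ∀ (v : lp (fun _ : ℕ => ℂ) 2) (s : ℂ), σw / 2 ≤ s.re → ∀ t : ℝ, 0 < t →
      ‖∑' j, dterm (tc v) s j‖ ≤ (t * ‖v‖ ^ 2 + κ0 / t) / 2 := by
    intro v s hs t ht
    have h1 : Summable fun j => ‖dterm (tc v) s j‖ := summable_norm_dterm hw hσ (hScond v) hs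
    have hgsum : Summable fun j => (if 2 ≤ j then ‖v j‖ ^ 2 else 0) := by
      exact (hsumcoord v).of_nonneg_of_le (fun j => by positivity)
        (fun j => by split_ifs <;> simp [sq_nonneg])
    have hmajs : Summable fun j =>
        (t / 2) * (if 2 ≤ j then ‖v j‖ ^ 2 else 0)
          + (1 / (2 * t)) * (if 2 ≤ j then w j * (j:ℝ) ^ (-σw) else 0) :=
      (hgsum.mul_left _).add (hσ.mul_left _)
    refine (norm_tsum_le_tsum_norm h1).trans ?_
    have hstep : ∀ j : ℕ, ‖dterm (tc v) s j‖
        ≤ (t / 2) * (if 2 ≤ j then ‖v j‖ ^ 2 else 0)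
          + (1 / (2 * t)) * (if 2 ≤ j then w j * (j:ℝ) ^ (-σw) else 0) := by
      intro j
      rw [norm_dterm_eq]
      split_ifs with hj
      · have hwj := hw j hj
        have hj0 : (0:ℝ) < (j:ℝ) := by positivity
        have hj1 : (1:ℝ) ≤ (j:ℝ) := by exact_mod_cast Nat.one_le_of_lt hj
        have htcnorm : ‖tc v j‖ = Real.sqrt (w j) * ‖v j‖ := by
          rw [htc]
          simp only [hj, if_true]
          rw [norm_mul, Complex.norm_real, Real.norm_eq_abs, abs_of_nonneg (Real.sqrt_nonneg _)]
        rw [htcnorm]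
        set x : ℝ := (j:ℝ) ^ (-s.re) with hx
        have hx0 : 0 ≤ x := Real.rpow_nonneg hj0.le _
        have key := two_mul_le_add_sq (Real.sqrt t * ‖v j‖) (Real.sqrt (w j) / Real.sqrt t * x)
        have hst : (0:ℝ) < Real.sqrt t := Real.sqrt_pos.mpr ht
        have e1 : 2 * (Real.sqrt t * ‖v j‖) * (Real.sqrt (w j) / Real.sqrt t * x)
            = 2 * (Real.sqrt (w j) * ‖v j‖ * x) := by
          field_simp
        have e2 : (Real.sqrt t * ‖v j‖) ^ 2 = t * ‖v j‖ ^ 2 := by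
          rw [mul_pow, Real.sq_sqrt ht.le]
        have e3 : (Real.sqrt (w j) / Real.sqrt t * x) ^ 2 = (w j / t) * x ^ 2 := by
          rw [mul_pow, div_pow, Real.sq_sqrt ht.le, Real.sq_sqrt hwj.le]
        have e4 : x ^ 2 ≤ (j:ℝ) ^ (-σw) := by
          have : x ^ 2 = (j:ℝ) ^ (-s.re + -s.re) := by
            rw [Real.rpow_add hj0]; rw [hx]; ring
          rw [this]
          exact Real.rpow_le_rpow_of_exponent_le hj1 (by linarith)
        have e5 : (w j / t) * x ^ 2 ≤ (w j / t) * (j:ℝ) ^ (-σw) :=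
          mul_le_mul_of_nonneg_left e4 (by positivity)
        have e7 : (1 / (2 * t)) * (w j * (j:ℝ) ^ (-σw)) = ((w j / t) * (j:ℝ) ^ (-σw)) / 2 := by
          field_simp
        linarith [key, e1.symm.le, e2.le, e3.le, e5, e7.le, e7.ge,
          key.trans_eq (by rw [e2, e3] : (Real.sqrt t * ‖v j‖) ^ 2 + (Real.sqrt (w j) / Real.sqrt t * x) ^ 2 = t * ‖v j‖ ^ 2 + (w j / t) * x ^ 2)]
      · positivity
    refine (Summable.tsum_le_tsum hstep h1 hmajs).trans ?_
    rw [Summable.tsum_add (hgsum.mul_left _) (hσ.mul_left _), tsum_mul_left, tsum_mul_left]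
    have hSv : (∑' j, (if 2 ≤ j then ‖v j‖ ^ 2 else 0)) ≤ ‖v‖ ^ 2 := by
      have := hSval v
      rwa [show (fun j => if 2 ≤ j then ‖tc v j‖ ^ 2 / w j else 0)
        = (fun j => if 2 ≤ j then ‖v j‖ ^ 2 else 0) from funext (htc_sq v)] at this
    have e6 : (1 / (2 * t)) * κ0 = (κ0 / t) / 2 := by
      rw [div_div]
      ring
    rw [← hκ0def, e6]
    have := mul_le_mul_of_nonneg_left hSv (by positivity : (0:ℝ) ≤ t / 2)
    linarith
  -- continuity of evaluations
  have heval : ∀ (s : ℂ), σw / 2 ≤ s.re → ∀ (vn : ℕ → lp (fun _ : ℕ => ℂ) 2)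
      (v : lp (fun _ : ℕ => ℂ) 2), Tendsto vn atTop (𝓝 v) →
      Tendsto (fun n => ∑' j, dterm (tc (vn n)) s j) atTop (𝓝 (∑' j, dterm (tc v) s j)) := by
    intro s hs vn v hv
    rw [Metric.tendsto_atTop]
    intro ε hε
    set t : ℝ := (κ0 + 1) * (2 / ε) with htdef
    have ht : 0 < t := by positivity
    have hκt : κ0 / t < ε / 2 := by
      rw [div_lt_iff₀ ht]
      have : ε / 2 * t = κ0 + 1 := by rw [htdef]; field_simp
      rw [this]
      linarith
    set δ : ℝ := Real.sqrt (ε / (2 * t)) with hδdef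
    have hδpos : 0 < δ := Real.sqrt_pos.mpr (by positivity)
    obtain ⟨N, hN⟩ := (Metric.tendsto_atTop.mp hv) δ hδpos
    refine ⟨N, fun n hn => ?_⟩
    have hdist : ‖vn n - v‖ < δ := by
      have := hN n hn
      rwa [dist_eq_norm] at this
    have hsub : (∑' j, dterm (tc (vn n)) s j) - (∑' j, dterm (tc v) s j)
        = ∑' j, dterm (tc (vn n - v)) s j := by
      rw [← Summable.tsum_sub (summable_dterm hw hσ (hScond (vn n)) hs)
        (summable_dterm hw hσ (hScond v) hs)]
      refine tsum_congr fun j => ?_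
      rw [← dterm_sub]
      exact (dterm_congr (fun i _ => htc_sub (vn n) v i) s j).symm
    rw [dist_eq_norm, hsub]
    have hb := hkey (vn n - v) s hs t ht
    have hsq : ‖vn n - v‖ ^ 2 < δ ^ 2 := by
      have h0 : 0 ≤ ‖vn n - v‖ := norm_nonneg _
      nlinarith
    have hδsq : δ ^ 2 = ε / (2 * t) := Real.sq_sqrt (by positivity)
    have htδ : t * δ ^ 2 = ε / 2 := by
      rw [hδsq]
      field_simp
    have : t * ‖vn n - v‖ ^ 2 < ε / 2 := by
      calc t * ‖vn n - v‖ ^ 2 < t * δ ^ 2 := by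
            exact (mul_lt_mul_iff_right₀ ht).mpr hsq
        _ = ε / 2 := htδ
    calc ‖∑' j, dterm (tc (vn n - v)) s j‖ ≤ (t * ‖vn n - v‖ ^ 2 + κ0 / t) / 2 := hb
      _ < (ε / 2 + ε / 2) / 2 := by linarith
      _ < ε := by linarith
  -- continuity of T by the closed graph theorem
  have hTcont : Continuous Tf := by
    refine TL.continuous_of_seq_closed_graph ?_
    intro un x y hun hTun
    have hTun' : Tendsto (fun n => Tf (un n)) atTop (𝓝 y) := hTun
    -- y vanishes below 2
    have hysupp : ∀ j : ℕ, ¬ (2 ≤ j) → y j = 0 := by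
      intro j hj
      have h0 : Tendsto (fun n => ‖y - Tf (un n)‖) atTop (𝓝 0) := by
        have := (tendsto_const_nhds (x := y) (f := atTop)).sub hTun'
        simpa using this.norm
      have hb : ∀ n, ‖y j‖ ≤ ‖y - Tf (un n)‖ := by
        intro n
        have h1 : (↑(y - Tf (un n)) : ℕ → ℂ) j = y j - Tf (un n) j := by
          rw [lp.coeFn_sub]; rfl
        have h2 : Tf (un n) j = 0 := by rw [hTf_apply, if_neg hj]
        have := lp.norm_apply_le_norm (by norm_num : (2:ℝ≥0∞) ≠ 0) (y - Tf (un n)) j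
        rwa [h1, h2, sub_zero] at this
      have : ‖y j‖ ≤ 0 := ge_of_tendsto' h0 hb
      simpa using norm_le_zero_iff.mp this
    -- the defining identity passes to the limit
    have hyid : ∀ s : ℂ, σw / 2 < s.re →
        φ s * ∑' j, dterm (tc x) s j = ∑' j, dterm (tc y) s j := by
      intro s hs
      have hl1 : Tendsto (fun n => φ s * ∑' j, dterm (tc (un n)) s j) atTop
          (𝓝 (φ s * ∑' j, dterm (tc x) s j)) :=
        (heval s hs.le un x hun).const_mul (φ s)
      have hl2 : Tendsto (fun n => φ s * ∑' j, dterm (tc (un n)) s j) atTop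
          (𝓝 (∑' j, dterm (tc y) s j)) := by
        have heq : (fun n => φ s * ∑' j, dterm (tc (un n)) s j)
            = fun n => ∑' j, dterm (tc (Tf (un n))) s j :=
          funext fun n => hTid (un n) s hs
        rw [heq]
        exact heval s hs.le (fun n => Tf (un n)) y hTun'
      exact tendsto_nhds_unique hl1 hl2
    -- conclude y = Tf x
    have hTLx : TL x = Tf x := rfl
    rw [hTLx]
    apply lp.ext
    funext j
    by_cases hj : 2 ≤ j
    · have hcoef : ∀ i, 2 ≤ i → tc y i = Dc x i := by
        refine huniq (tc y) (Dc x) (hScond y) (hD1 x) (fun s hs => ?_)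
        rw [← hyid s hs]
        exact hD2 x s hs
      have h1 := hcoef j hj
      rw [htc] at h1
      simp only [hj, if_true] at h1
      rw [hTf_apply, if_pos hj, ← h1, mul_div_cancel_left₀ _ (hsqwC j hj)]
    · rw [hysupp j hj, hTf_apply, if_neg hj]
  -- the bundled operator and its norm
  set Tcl : lp (fun _ : ℕ => ℂ) 2 →L[ℂ] lp (fun _ : ℕ => ℂ) 2 := ⟨TL, hTcont⟩ with hTcl
  set C : ℝ := ‖Tcl‖ with hCdef
  have hCnn : 0 ≤ C := norm_nonneg _
  have hTnorm : ∀ u : lp (fun _ : ℕ => ℂ) 2, ‖Tf u‖ ≤ C * ‖u‖ := fun u => Tcl.le_opNorm u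
  -- basis vectors
  set sing : ℕ → lp (fun _ : ℕ => ℂ) 2 := fun q => lp.single 2 q (1:ℂ) with hsing
  have hsing_apply : ∀ q j : ℕ, sing q j = if j = q then 1 else 0 := by
    intro q j
    rw [hsing]
    simp only
    rw [lp.single_apply]
    by_cases h : j = q
    · subst h; simp
    · simp [h]
  have hsing_norm : ∀ q : ℕ, ‖sing q‖ = 1 := by
    intro q
    rw [hsing]
    simpa using lp.norm_single htp (fun _ : ℕ => (1:ℂ)) q
  -- the Dirichlet polynomial of a basis vector
  have hFsing : ∀ q : ℕ, 2 ≤ q → ∀ s : ℂ,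
      ∑' j, dterm (tc (sing q)) s j = ((Real.sqrt (w q) : ℝ) : ℂ) * (q:ℂ) ^ (-s) := by
    intro q hq s
    rw [tsum_eq_single q ?_]
    · unfold dterm
      rw [if_pos hq, htc]
      simp only [hsing_apply, if_pos rfl, hq, if_true]
      ring
    · intro j hjq
      unfold dterm
      split_ifs with hj
      · rw [htc]
        simp only [hsing_apply, hj, if_true, if_neg hjq]
        ring
      · rfl
  -- the coefficient bound coming from the operator norm
  have hDbound : ∀ q : ℕ, 2 ≤ q → ∀ i : ℕ, 2 ≤ i →
      ‖Dc (sing q) i‖ ^ 2 / w i ≤ C ^ 2 := by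
    intro q hq i hi
    have hsum := hD1 (sing q)
    have hle : (∑' j, if 2 ≤ j then ‖Dc (sing q) j‖ ^ 2 / w j else 0) ≤ C ^ 2 := by
      have he : ∀ j : ℕ, (if 2 ≤ j then ‖Dc (sing q) j‖ ^ 2 / w j else 0)
          = ‖Tf (sing q) j‖ ^ 2 := by
        intro j
        rw [hTf_apply]
        split_ifs with hj
        · rw [norm_div, Complex.norm_real, Real.norm_eq_abs,
            abs_of_nonneg (Real.sqrt_nonneg _), div_pow, Real.sq_sqrt (hw j hj).le]
        · simp
      rw [tsum_congr he, hnormtsum (Tf (sing q))]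
      have h2 := hTnorm (sing q)
      rw [hsing_norm q, mul_one] at h2
      nlinarith [norm_nonneg (Tf (sing q))]
    refine le_trans ?_ hle
    have hterm := Summable.le_tsum hsum i (fun j _ => by
      split_ifs with h
      · exact div_nonneg (by positivity) (hw j h).le
      · exact le_rfl)
    rwa [if_pos hi] at hterm
  -- the defining identity for basis vectors
  have hidq : ∀ q : ℕ, 2 ≤ q → ∀ s : ℂ, σw / 2 < s.re →
      φ s * (((Real.sqrt (w q) : ℝ) : ℂ) * (q:ℂ) ^ (-s))
        = ∑' j, dterm (Dc (sing q)) s j := by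
    intro q hq s hs
    rw [← hFsing q hq s]
    calc φ s * ∑' j, dterm (tc (sing q)) s j
        = ∑' j, dterm (tc (Tf (sing q))) s j := hTid (sing q) s hs
      _ = ∑' j, dterm (Dc (sing q)) s j := tsum_congr (htcTf (sing q) s)
  -- shifted coefficients
  set shift : ℕ → (ℕ → ℂ) → ℕ → ℂ :=
    fun r c N => if r ∣ N ∧ 2 * r ≤ N then c (N / r) else 0 with hshift
  have hshift_term : ∀ r : ℕ, 2 ≤ r → ∀ (c : ℕ → ℂ) (s : ℂ) (j : ℕ),
      dterm (shift r c) s (r * j) = (r:ℂ) ^ (-s) * dterm c s j := by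
    intro r hr c s j
    have hr0 : 0 < r := by omega
    by_cases hj : 2 ≤ j
    · have h1 : 2 ≤ r * j := by
        calc 2 ≤ j := hj
        _ ≤ r * j := Nat.le_mul_of_pos_left j hr0
      have h2r : 2 * r ≤ r * j := by
        have := Nat.mul_le_mul_left r hj
        omega
      unfold dterm
      rw [if_pos h1, if_pos hj, hshift]
      simp only
      rw [if_pos ⟨dvd_mul_right r j, h2r⟩, Nat.mul_div_cancel_left j hr0]
      have hcast : ((r * j : ℕ) : ℂ) ^ (-s) = (r:ℂ) ^ (-s) * (j:ℂ) ^ (-s) := by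
        push_cast
        exact Complex.natCast_mul_natCast_cpow r j (-s)
      rw [hcast]
      ring
    · have hj' : j = 0 ∨ j = 1 := by omega
      rcases hj' with rfl | rfl
      · unfold dterm
        rw [Nat.mul_zero, if_neg (by omega), if_neg hj]
        ring
      · unfold dterm
        rw [Nat.mul_one, if_pos hr, if_neg hj, hshift]
        simp only
        rw [if_neg (by
          rintro ⟨-, habs⟩
          omega)]
        ring
  have hshift_vanish : ∀ r : ℕ, 2 ≤ r → ∀ (c : ℕ → ℂ) (s : ℂ) (N : ℕ),
      (N ∉ Set.range fun j : ℕ => r * j) → dterm (shift r c) s N = 0 := by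
    intro r hr c s N hN
    unfold dterm
    split_ifs with h2
    · rw [hshift]
      simp only
      rw [if_neg, zero_mul]
      rintro ⟨⟨k, hk⟩, -⟩
      exact hN ⟨k, hk.symm⟩
    · rfl
  have hrinj : ∀ r : ℕ, 2 ≤ r → Function.Injective (fun j : ℕ => r * j) := by
    intro r hr a b hab
    exact Nat.eq_of_mul_eq_mul_left (by omega) hab
  have hshift_sum : ∀ r : ℕ, 2 ≤ r → ∀ (c : ℕ → ℂ) (s : ℂ),
      Summable (fun j => ‖dterm c s j‖) →
      Summable (fun N => ‖dterm (shift r c) s N‖) ∧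
      ∑' N, dterm (shift r c) s N = (r:ℂ) ^ (-s) * ∑' j, dterm c s j := by
    intro r hr c s hc
    have hinj := hrinj r hr
    have hvan : ∀ N ∉ Set.range (fun j : ℕ => r * j), dterm (shift r c) s N = 0 :=
      fun N hN => hshift_vanish r hr c s N hN
    have hvann : ∀ N ∉ Set.range (fun j : ℕ => r * j), ‖dterm (shift r c) s N‖ = 0 :=
      fun N hN => by rw [hvan N hN, norm_zero]
    constructor
    · refine (hinj.summable_iff hvann).mp ?_
      have hcompeq : ((fun N => ‖dterm (shift r c) s N‖) ∘ (fun j : ℕ => r * j))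
          = fun j => ‖(r:ℂ) ^ (-s)‖ * ‖dterm c s j‖ := by
        funext j
        simp only [Function.comp_apply]
        rw [hshift_term r hr c s j, norm_mul]
      rw [hcompeq]
      exact hc.mul_left _
    · rw [← hinj.tsum_eq (Function.support_subset_iff'.mpr hvan)]
      calc ∑' j, dterm (shift r c) s (r * j)
          = ∑' j, ((r:ℂ) ^ (-s) * dterm c s j) := tsum_congr (hshift_term r hr c s)
        _ = (r:ℂ) ^ (-s) * ∑' j, dterm c s j := tsum_mul_left
  -- cross identities between basis images
  have hcross : ∀ q r : ℕ, 2 ≤ q → 2 ≤ r → ∀ N : ℕ, 2 ≤ N →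
      ((Real.sqrt (w r) : ℝ) : ℂ) * shift r (Dc (sing q)) N
        = ((Real.sqrt (w q) : ℝ) : ℂ) * shift q (Dc (sing r)) N := by
    intro q r hq hr
    have key : ∀ N, 2 ≤ N → (fun M => ((Real.sqrt (w r) : ℝ) : ℂ) * shift r (Dc (sing q)) M
        - ((Real.sqrt (w q) : ℝ) : ℂ) * shift q (Dc (sing r)) M) N = 0 := by
      refine dirichlet_unique (σ0 := σw / 2) (fun σ hσ' => ?_) (fun σ hσ' => ?_)
      · have hre : σw / 2 ≤ ((σ : ℂ)).re := by simpa using hσ'.le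
        have h1 := (hshift_sum r hr (Dc (sing q)) (σ : ℂ)
          (summable_norm_dterm hw hσ (hD1 (sing q)) hre)).1
        have h2 := (hshift_sum q hq (Dc (sing r)) (σ : ℂ)
          (summable_norm_dterm hw hσ (hD1 (sing r)) hre)).1
        refine ((h1.mul_left ‖((Real.sqrt (w r) : ℝ) : ℂ)‖).add
          (h2.mul_left ‖((Real.sqrt (w q) : ℝ) : ℂ)‖)).of_nonneg_of_le
          (fun j => norm_nonneg _) (fun j => ?_)
        have e1 : dterm (fun M => ((Real.sqrt (w r) : ℝ) : ℂ) * shift r (Dc (sing q)) M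
            - ((Real.sqrt (w q) : ℝ) : ℂ) * shift q (Dc (sing r)) M) (σ : ℂ) j
            = ((Real.sqrt (w r) : ℝ) : ℂ) * dterm (shift r (Dc (sing q))) (σ : ℂ) j
              - ((Real.sqrt (w q) : ℝ) : ℂ) * dterm (shift q (Dc (sing r))) (σ : ℂ) j := by
          rw [dterm_sub (fun M => ((Real.sqrt (w r) : ℝ) : ℂ) * shift r (Dc (sing q)) M)
            (fun M => ((Real.sqrt (w q) : ℝ) : ℂ) * shift q (Dc (sing r)) M),
            dterm_const_mul, dterm_const_mul]
        rw [e1]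
        calc ‖_ - _‖ ≤ ‖((Real.sqrt (w r) : ℝ) : ℂ) * dterm (shift r (Dc (sing q))) (σ : ℂ) j‖
              + ‖((Real.sqrt (w q) : ℝ) : ℂ) * dterm (shift q (Dc (sing r))) (σ : ℂ) j‖ :=
            norm_sub_le _ _
          _ = ‖((Real.sqrt (w r) : ℝ) : ℂ)‖ * ‖dterm (shift r (Dc (sing q))) (σ : ℂ) j‖
              + ‖((Real.sqrt (w q) : ℝ) : ℂ)‖ * ‖dterm (shift q (Dc (sing r))) (σ : ℂ) j‖ := by
            rw [norm_mul, norm_mul]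
      · have hre : σw / 2 ≤ ((σ : ℂ)).re := by simpa using hσ'.le
        have hre' : σw / 2 < ((σ : ℂ)).re := by simpa using hσ'
        have h1 := hshift_sum r hr (Dc (sing q)) (σ : ℂ)
          (summable_norm_dterm hw hσ (hD1 (sing q)) hre)
        have h2 := hshift_sum q hq (Dc (sing r)) (σ : ℂ)
          (summable_norm_dterm hw hσ (hD1 (sing r)) hre)
        have e1 : ∀ j, dterm (fun M => ((Real.sqrt (w r) : ℝ) : ℂ) * shift r (Dc (sing q)) M
            - ((Real.sqrt (w q) : ℝ) : ℂ) * shift q (Dc (sing r)) M) (σ : ℂ) j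
            = ((Real.sqrt (w r) : ℝ) : ℂ) * dterm (shift r (Dc (sing q))) (σ : ℂ) j
              - ((Real.sqrt (w q) : ℝ) : ℂ) * dterm (shift q (Dc (sing r))) (σ : ℂ) j := by
          intro j
          rw [dterm_sub (fun M => ((Real.sqrt (w r) : ℝ) : ℂ) * shift r (Dc (sing q)) M)
            (fun M => ((Real.sqrt (w q) : ℝ) : ℂ) * shift q (Dc (sing r)) M),
            dterm_const_mul, dterm_const_mul]
        calc ∑' j, dterm (fun M => ((Real.sqrt (w r) : ℝ) : ℂ) * shift r (Dc (sing q)) M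
              - ((Real.sqrt (w q) : ℝ) : ℂ) * shift q (Dc (sing r)) M) (σ : ℂ) j
            = ∑' j, (((Real.sqrt (w r) : ℝ) : ℂ) * dterm (shift r (Dc (sing q))) (σ : ℂ) j
              - ((Real.sqrt (w q) : ℝ) : ℂ) * dterm (shift q (Dc (sing r))) (σ : ℂ) j) :=
              tsum_congr e1
          _ = ((Real.sqrt (w r) : ℝ) : ℂ) * ∑' j, dterm (shift r (Dc (sing q))) (σ : ℂ) j
              - ((Real.sqrt (w q) : ℝ) : ℂ) * ∑' j, dterm (shift q (Dc (sing r))) (σ : ℂ) j := by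
              rw [Summable.tsum_sub ((h1.1.of_norm).mul_left _) ((h2.1.of_norm).mul_left _),
                tsum_mul_left, tsum_mul_left]
          _ = 0 := by
              rw [h1.2, h2.2, ← hidq q hq (σ : ℂ) hre', ← hidq r hr (σ : ℂ) hre']
              ring
    intro N hN
    have := key N hN
    simpa [sub_eq_zero] using this
  -- the coefficient sequence b
  set b : ℕ → ℂ := fun m => Dc (sing 2) (2 * m) with hbdef
  -- evaluation of shifted coefficients on the chain
  have hstar : ∀ q : ℕ, 2 ≤ q → ∀ m : ℕ, 1 ≤ m →
      ((Real.sqrt (w 2) : ℝ) : ℂ) * Dc (sing q) (q * m)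
        = ((Real.sqrt (w q) : ℝ) : ℂ) * b m := by
    intro q hq m hm
    have h2q : 2 * 2 ≤ 2 * q * m := by
      calc 2 * 2 ≤ 2 * q := by omega
        _ ≤ 2 * q * m := Nat.le_mul_of_pos_right _ (by omega)
    have h2q' : 2 * q ≤ 2 * q * m := Nat.le_mul_of_pos_right _ (by omega)
    have hc := hcross q 2 hq (le_refl 2) (2 * q * m) (by omega)
    have e1 : shift 2 (Dc (sing q)) (2 * q * m) = Dc (sing q) (q * m) := by
      rw [hshift]
      simp only
      rw [if_pos ⟨⟨q * m, by ring⟩, h2q⟩]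
      congr 1
      have h : 2 * q * m = 2 * (q * m) := by ring
      rw [h, Nat.mul_div_cancel_left _ (by norm_num : 0 < 2)]
    have e2 : shift q (Dc (sing 2)) (2 * q * m) = b m := by
      rw [hshift]
      simp only
      rw [if_pos ⟨⟨2 * m, by ring⟩, h2q'⟩]
      rw [hbdef]
      simp only
      congr 1
      have h : 2 * q * m = q * (2 * m) := by ring
      rw [h, Nat.mul_div_cancel_left _ (by omega : 0 < q)]
    rw [e1, e2] at hc
    exact hc
  -- odd coefficients vanish
  have hodd : ∀ j : ℕ, 2 ≤ j → ¬(2 ∣ j) → Dc (sing 2) j = 0 := by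
    intro j hj hoddj
    have hc := hcross 2 3 (le_refl 2) (by norm_num) (3 * j) (by omega)
    have e1 : shift 3 (Dc (sing 2)) (3 * j) = Dc (sing 2) j := by
      rw [hshift]
      simp only
      rw [if_pos ⟨⟨j, rfl⟩, by omega⟩]
      congr 1
      rw [Nat.mul_div_cancel_left _ (by norm_num : 0 < 3)]
    have e2 : shift 2 (Dc (sing 3)) (3 * j) = 0 := by
      rw [hshift]
      simp only
      rw [if_neg]
      rintro ⟨hdvd, -⟩
      exact hoddj (by omega)
    rw [e1, e2, mul_zero] at hc
    rcases mul_eq_zero.mp hc with h | h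
    · exact absurd h (hsqwC 3 (by norm_num))
    · exact h
  -- the fundamental weight inequality
  have hbbound : ∀ q : ℕ, 2 ≤ q → ∀ m : ℕ, 1 ≤ m →
      ‖b m‖ ^ 2 * w q ≤ (C ^ 2 * w 2) * w (q * m) := by
    intro q hq m hm
    have hqm : 2 ≤ q * m := le_trans hq (Nat.le_mul_of_pos_right _ (by omega))
    have h1 := hDbound q hq (q * m) hqm
    have h2 := hstar q hq m hm
    have h3 : Real.sqrt (w 2) * ‖Dc (sing q) (q * m)‖ = Real.sqrt (w q) * ‖b m‖ := by
      have := congrArg norm h2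
      rwa [norm_mul, norm_mul, Complex.norm_real, Complex.norm_real, Real.norm_eq_abs,
        Real.norm_eq_abs, abs_of_nonneg (Real.sqrt_nonneg _),
        abs_of_nonneg (Real.sqrt_nonneg _)] at this
    have h4 : w 2 * ‖Dc (sing q) (q * m)‖ ^ 2 = w q * ‖b m‖ ^ 2 := by
      calc w 2 * ‖Dc (sing q) (q * m)‖ ^ 2
          = (Real.sqrt (w 2) * ‖Dc (sing q) (q * m)‖) ^ 2 := by
            rw [mul_pow, Real.sq_sqrt (hw 2 (by norm_num)).le]
        _ = (Real.sqrt (w q) * ‖b m‖) ^ 2 := by rw [h3]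
        _ = w q * ‖b m‖ ^ 2 := by rw [mul_pow, Real.sq_sqrt (hw q hq).le]
    have h5 : ‖Dc (sing q) (q * m)‖ ^ 2 ≤ C ^ 2 * w (q * m) := by
      have hwqm := hw (q * m) hqm
      rwa [div_le_iff₀ hwqm] at h1
    calc ‖b m‖ ^ 2 * w q = w 2 * ‖Dc (sing q) (q * m)‖ ^ 2 := by rw [h4]; ring
      _ ≤ w 2 * (C ^ 2 * w (q * m)) := mul_le_mul_of_nonneg_left h5 (hw 2 (by norm_num)).le
      _ = (C ^ 2 * w 2) * w (q * m) := by ring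
  -- b vanishes from index 2 on
  have hbzero : ∀ m : ℕ, 2 ≤ m → b m = 0 := by
    intro m hm
    by_contra hbm
    have hbpos : 0 < ‖b m‖ ^ 2 := pow_pos (norm_pos_iff.mpr hbm) 2
    set B : ℝ := (C ^ 2 * w 2) / ‖b m‖ ^ 2 with hBdef
    have hBnn : 0 ≤ B :=
      div_nonneg (mul_nonneg (sq_nonneg C) (hw 2 (by norm_num)).le) hbpos.le
    have hstep : ∀ q : ℕ, 2 ≤ q → w q ≤ B * w (q * m) := by
      intro q hq
      have h := hbbound q hq m (by omega)
      rw [hBdef, div_mul_eq_mul_div, le_div_iff₀ hbpos]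
      nlinarith [h]
    have hchain : ∀ K : ℕ, w 2 ≤ B ^ K * w (2 * m ^ K) := by
      intro K
      induction K with
      | zero => simp
      | succ K ihK =>
        have hq : 2 ≤ 2 * m ^ K := by
          have := Nat.one_le_pow K m (by omega)
          omega
        have hs := hstep (2 * m ^ K) hq
        have harith : (2 * m ^ K) * m = 2 * m ^ (K + 1) := by ring
        rw [harith] at hs
        calc w 2 ≤ B ^ K * w (2 * m ^ K) := ihK
          _ ≤ B ^ K * (B * w (2 * m ^ (K + 1))) :=
              mul_le_mul_of_nonneg_left hs (pow_nonneg hBnn K)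
          _ = B ^ (K + 1) * w (2 * m ^ (K + 1)) := by ring
    set R : ℝ := Real.logb 2 (B + 1) with hRdef
    have hR0 : 0 ≤ R := Real.logb_nonneg (by norm_num) (by linarith)
    have h2R : (2:ℝ) ^ R = B + 1 :=
      Real.rpow_logb (by norm_num) (by norm_num) (by linarith)
    have hδ' := hδ (-R) m
    have hinj2 : Function.Injective (fun K : ℕ => 2 * m ^ K) := by
      intro a c hac
      simp only at hac
      exact Nat.pow_right_injective (by omega) (by omega : m ^ a = m ^ c)
    have hsmooth : ∀ K : ℕ, 2 ≤ 2 * m ^ K ∧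
        ∀ p ∈ (2 * m ^ K).primeFactors, p ≤ Nat.nth Nat.Prime m := by
      intro K
      constructor
      · have := Nat.one_le_pow K m (by omega)
        omega
      · intro p hp
        rw [Nat.mem_primeFactors] at hp
        obtain ⟨hpp, hpd, -⟩ := hp
        have hnth : m ≤ Nat.nth Nat.Prime m :=
          (Nat.nth_strictMono Nat.infinite_setOf_prime).le_apply
        have hple : p ≤ m := by
          rcases (Nat.Prime.dvd_mul hpp).mp hpd with h2' | hmk
          · have : p = 2 := (Nat.prime_dvd_prime_iff_eq hpp Nat.prime_two).mp h2'
            omega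
          · exact Nat.le_of_dvd (by omega) (Nat.Prime.dvd_of_dvd_pow hpp hmk)
        omega
    have hcomp := hδ'.comp_injective hinj2
    have hterms : ((fun j : ℕ => if 2 ≤ j ∧ ∀ p ∈ j.primeFactors, p ≤ Nat.nth Nat.Prime m
        then w j * (j:ℝ) ^ (-(-R)) else 0) ∘ (fun K : ℕ => 2 * m ^ K))
        = fun K : ℕ => w (2 * m ^ K) * ((2 * m ^ K : ℕ) : ℝ) ^ R := by
      funext K
      simp only [Function.comp_apply, if_pos (hsmooth K), neg_neg]
    rw [hterms] at hcomp
    have htend0 : Tendsto (fun K : ℕ => w (2 * m ^ K) * ((2 * m ^ K : ℕ) : ℝ) ^ R)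
        atTop (𝓝 0) := hcomp.tendsto_atTop_zero
    have hfinal : ∀ K : ℕ, w 2 ≤ w (2 * m ^ K) * ((2 * m ^ K : ℕ) : ℝ) ^ R := by
      intro K
      have h1 := hchain K
      have hwK := hw (2 * m ^ K) (hsmooth K).1
      have hBK : B ^ K ≤ ((2 * m ^ K : ℕ) : ℝ) ^ R := by
        have hcast : ((2 * m ^ K : ℕ) : ℝ) = 2 * ((m:ℝ)) ^ K := by push_cast; ring
        have hmK0 : (0:ℝ) ≤ ((m:ℝ)) ^ K := by positivity
        have hsplit : ((2 * m ^ K : ℕ) : ℝ) ^ R = (2:ℝ) ^ R * (((m:ℝ)) ^ K) ^ R := by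
          rw [hcast, Real.mul_rpow (by norm_num) hmK0]
        have hswap : (((m:ℝ)) ^ K) ^ R = ((m:ℝ) ^ R) ^ K := by
          rw [← Real.rpow_natCast ((m:ℝ)) K, ← Real.rpow_mul (by positivity),
            mul_comm, Real.rpow_mul (by positivity), Real.rpow_natCast]
        have hm2 : (2:ℝ) ≤ (m:ℝ) := by exact_mod_cast hm
        have hmR : (B + 1) ≤ (m:ℝ) ^ R := by
          rw [← h2R]
          exact Real.rpow_le_rpow (by norm_num) hm2 hR0
        have h6 : B ^ K ≤ ((m:ℝ) ^ R) ^ K :=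
          pow_le_pow_left₀ hBnn (by linarith) K
        have h7 : ((m:ℝ) ^ R) ^ K ≤ (2:ℝ) ^ R * ((m:ℝ) ^ R) ^ K := by
          have : (1:ℝ) ≤ (2:ℝ) ^ R := by rw [h2R]; linarith
          nlinarith [pow_nonneg (Real.rpow_nonneg (by norm_num : (0:ℝ) ≤ (m:ℝ)) R) K]
        rw [hsplit, hswap]
        linarith
      calc w 2 ≤ B ^ K * w (2 * m ^ K) := h1
        _ ≤ ((2 * m ^ K : ℕ) : ℝ) ^ R * w (2 * m ^ K) :=
            mul_le_mul_of_nonneg_right hBK hwK.le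
        _ = w (2 * m ^ K) * ((2 * m ^ K : ℕ) : ℝ) ^ R := by ring
    have hcontra : w 2 ≤ 0 := ge_of_tendsto' htend0 hfinal
    exact absurd hcontra (not_le.mpr (hw 2 (by norm_num)))
  -- all coefficients from 3 on vanish
  have hD2zero : ∀ j : ℕ, 3 ≤ j → Dc (sing 2) j = 0 := by
    intro j hj
    by_cases h2 : 2 ∣ j
    · obtain ⟨m, rfl⟩ := h2
      have hm : 2 ≤ m := by omega
      have hz := hbzero m hm
      rw [hbdef] at hz
      exact hz
    · exact hodd j (by omega) h2
  -- φ is constant on the half-plane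
  have hconst : ∀ s : ℂ, σw / 2 < s.re →
      φ s = Dc (sing 2) 2 / ((Real.sqrt (w 2) : ℝ) : ℂ) := by
    intro s hs
    have hid := hidq 2 (le_refl 2) s hs
    have hsum_single : ∑' j, dterm (Dc (sing 2)) s j
        = Dc (sing 2) 2 * ((2:ℕ):ℂ) ^ (-s) := by
      rw [tsum_eq_single 2 ?_]
      · unfold dterm
        rw [if_pos (le_refl 2)]
      · intro j hj2
        unfold dterm
        split_ifs with hj
        · have h3 : 3 ≤ j := by omega
          rw [hD2zero j h3, zero_mul]
        · rfl
    rw [hsum_single] at hid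
    have hne : ((2:ℕ):ℂ) ^ (-s) ≠ 0 := by
      have := Complex.norm_natCast_cpow_of_pos (by norm_num : 0 < 2) (-s)
      have hpos : 0 < ‖((2:ℕ):ℂ) ^ (-s)‖ := by
        rw [this]
        positivity
      exact norm_pos_iff.mp hpos
    rw [← mul_assoc] at hid
    have hcancel := mul_right_cancel₀ hne hid
    rw [eq_div_iff (hsqwC 2 (le_refl 2))]
    exact hcancel
  intro s u hs hu
  rw [hconst s hs, hconst u hu]
end
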